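/- arXiv:2006.11772 — 5 statements merged into one kernel-verified Lean document; each statement's English description precedes it below -/
import Mathlib

section
/- Let n1 ≥ 5 be even, n2 ≥ 1 and n3 ≥ 2. Then the metric dimension of G_{n1,n2,n3} equals n3 + 1. -/
/-- `S` is a metric generator of `G`: every pair of distinct vertices is
identified by some vertex of `S` via distances. -/
def IsMetricGenerator {V : Type*} (G : SimpleGraph V) (S : Set V) : Prop :=
  ∀ u v : V, u ≠ v → ∃ z ∈ S, G.dist u z ≠ G.dist v z

/-- The metric dimension of `G`: the least cardinality of a (finite) metric generator. -/
noncomputable def metricDim {V : Type*} (G : SimpleGraph V) : ℕ :=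
  sInf {n | ∃ S : Set V, S.Finite ∧ IsMetricGenerator G S ∧ S.ncard = n}

/-- Distance from an edge (unordered pair) to a vertex:
`d(uv, z) = min (d u z) (d v z)`. -/
noncomputable def edgeDist {V : Type*} (G : SimpleGraph V) (e : Sym2 V) (z : V) : ℕ :=
  Sym2.lift ⟨fun u v => min (G.dist u z) (G.dist v z), fun u v => by simp [min_comm]⟩ e

/-- `S` is an edge metric generator of `G`: every pair of distinct edges is
distinguished by some vertex of `S`. -/
def IsEdgeMetricGenerator {V : Type*} (G : SimpleGraph V) (S : Set V) : Prop :=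
  ∀ e ∈ G.edgeSet, ∀ f ∈ G.edgeSet, e ≠ f → ∃ z ∈ S, edgeDist G e z ≠ edgeDist G f z

/-- The edge metric dimension of `G`: the least cardinality of a (finite) edge
metric generator. -/
noncomputable def edgeMetricDim {V : Type*} (G : SimpleGraph V) : ℕ :=
  sInf {n | ∃ S : Set V, S.Finite ∧ IsEdgeMetricGenerator G S ∧ S.ncard = n}
/-- Vertices of the graph `G_{n1,n2,n3}`: cycle vertices `a 0, …, a (n1-1)`
(with `a k` standing for the paper's `a_{k+1}`), path vertices
`b 0, …, b (n2-1)`, the special vertices `c` and `i`, and pendant vertices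
`j 0, …, j (n3-1)` attached to `i`. -/
inductive GVert (n1 n2 n3 : ℕ) : Type where
  | a : Fin n1 → GVert n1 n2 n3
  | b : Fin n2 → GVert n1 n2 n3
  | c : GVert n1 n2 n3
  | i : GVert n1 n2 n3
  | j : Fin n3 → GVert n1 n2 n3

/-- Base relation whose symmetrization gives the edges of `G_{n1,n2,n3}`:
the cycle `a_1 a_2 ⋯ a_{n1} a_1`, the path `b_1 b_2 ⋯ b_{n2}` joined by the
edge `a_2 b_1`, the edge `a_{n1} c`, the edge `a_1 i`, and the pendant edges
`i j_t`. -/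
def GRel (n1 n2 n3 : ℕ) : GVert n1 n2 n3 → GVert n1 n2 n3 → Prop
  | .a k, .a l => (l : ℕ) = ((k : ℕ) + 1) % n1
  | .a k, .b m => (k : ℕ) = 1 ∧ (m : ℕ) = 0
  | .b m, .b m' => (m' : ℕ) = (m : ℕ) + 1
  | .a k, .c => (k : ℕ) = n1 - 1
  | .a k, .i => (k : ℕ) = 0
  | .i, .j _ => True
  | _, _ => False

/-- The graph `G_{n1,n2,n3}` from the paper. -/
def GGraph (n1 n2 n3 : ℕ) : SimpleGraph (GVert n1 n2 n3) :=
  SimpleGraph.fromRel (GRel n1 n2 n3)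

/-! ### Auxiliary development -/

/-- cycle distance on `Z/n` -/
def cyc (n k l : ℕ) : ℕ := min ((k - l) + (l - k)) (n - ((k - l) + (l - k)))

lemma cyc_comm (n k l : ℕ) : cyc n k l = cyc n l k := by unfold cyc; omega

/-- the true distance function on `GVert` -/
def Dv {n1 n2 n3 : ℕ} : GVert n1 n2 n3 → GVert n1 n2 n3 → ℕ
  | .a k, .a l => cyc n1 k l
  | .a k, .b m => cyc n1 k 1 + m + 1
  | .b m, .a k => cyc n1 k 1 + m + 1
  | .a k, .c => cyc n1 k (n1-1) + 1
  | .c, .a k => cyc n1 k (n1-1) + 1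
  | .a k, .i => cyc n1 k 0 + 1
  | .i, .a k => cyc n1 k 0 + 1
  | .a k, .j _ => cyc n1 k 0 + 2
  | .j _, .a k => cyc n1 k 0 + 2
  | .b m, .b m' => ((m : ℕ) - m') + ((m' : ℕ) - m)
  | .b m, .c => m + 4
  | .c, .b m => m + 4
  | .b m, .i => m + 3
  | .i, .b m => m + 3
  | .b m, .j _ => m + 4
  | .j _, .b m => m + 4
  | .c, .c => 0
  | .c, .i => 3
  | .i, .c => 3
  | .c, .j _ => 4
  | .j _, .c => 4
  | .i, .i => 0
  | .i, .j _ => 1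
  | .j _, .i => 1
  | .j s, .j t => if s = t then 0 else 2

section
variable {n1 n2 n3 : ℕ}

lemma Dv_self (u : GVert n1 n2 n3) : Dv u u = 0 := by
  cases u <;> simp [Dv, cyc]

lemma Dv_pos (h1 : 5 ≤ n1) {u v : GVert n1 n2 n3} (h : u ≠ v) :
    0 < Dv u v := by
  cases u <;> cases v <;> simp_all [Dv, cyc] <;> omega

lemma adj_iff (u v : GVert n1 n2 n3) :
    (GGraph n1 n2 n3).Adj u v ↔ u ≠ v ∧ (GRel n1 n2 n3 u v ∨ GRel n1 n2 n3 v u) :=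
  SimpleGraph.fromRel_adj _ _ _

lemma adj_a_succ (h1 : 5 ≤ n1) (k : Fin n1) :
    (GGraph n1 n2 n3).Adj (.a k) (.a ⟨((k : ℕ) + 1) % n1, Nat.mod_lt _ (by omega)⟩) := by
  rw [adj_iff]
  have hk := k.isLt
  constructor
  · intro hcon
    have : (k : ℕ) = ((k : ℕ) + 1) % n1 := by
      have := congrArg (fun x => match x with | GVert.a t => (t : ℕ) | _ => 0) hcon
      simpa using this
    rcases Nat.lt_or_ge ((k : ℕ) + 1) n1 with h | h
    · rw [Nat.mod_eq_of_lt h] at this; omega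
    · have he : (k : ℕ) + 1 = n1 := by omega
      rw [he, Nat.mod_self] at this; omega
  · left; exact rfl

lemma exists_walk_a (h1 : 5 ≤ n1) :
    ∀ (d : ℕ) (k l : Fin n1), (l : ℕ) = ((k : ℕ) + d) % n1 →
      ∃ p : (GGraph n1 n2 n3).Walk (.a k) (.a l), p.length ≤ d := by
  intro d
  induction d with
  | zero =>
    intro k l hl
    have : l = k := Fin.ext (by rw [hl, Nat.add_zero, Nat.mod_eq_of_lt k.isLt])
    subst this
    exact ⟨.nil, by simp⟩
  | succ d ih =>
    intro k l hl
    set k' : Fin n1 := ⟨((k : ℕ) + 1) % n1, Nat.mod_lt _ (by omega)⟩ with hk'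
    have hrec : (l : ℕ) = ((k' : ℕ) + d) % n1 := by
      rw [hk']
      simp only []
      rw [Nat.mod_add_mod, hl]
      ring_nf
    obtain ⟨p, hp⟩ := ih k' l hrec
    exact ⟨.cons (adj_a_succ h1 k) p, by simpa using Nat.succ_le_succ hp⟩

lemma exists_walk_aa (h1 : 5 ≤ n1) (k l : Fin n1) :
    ∃ p : (GGraph n1 n2 n3).Walk (.a k) (.a l), p.length ≤ cyc n1 k l := by
  have hk := k.isLt; have hl := l.isLt
  rcases le_total ((k:ℕ) - (l:ℕ) + ((l:ℕ) - (k:ℕ))) (n1 - ((k:ℕ) - (l:ℕ) + ((l:ℕ) - (k:ℕ)))) with hc | hc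
  · rcases le_total (k : ℕ) (l : ℕ) with h | h
    · obtain ⟨p, hp⟩ := exists_walk_a (n2 := n2) (n3 := n3) h1 ((l:ℕ) - (k:ℕ)) k l
        (by rw [show (k:ℕ) + ((l:ℕ) - (k:ℕ)) = (l:ℕ) by omega, Nat.mod_eq_of_lt hl])
      exact ⟨p, by unfold cyc; omega⟩
    · obtain ⟨p, hp⟩ := exists_walk_a (n2 := n2) (n3 := n3) h1 ((k:ℕ) - (l:ℕ)) l k
        (by rw [show (l:ℕ) + ((k:ℕ) - (l:ℕ)) = (k:ℕ) by omega, Nat.mod_eq_of_lt hk])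
      exact ⟨p.reverse, by unfold cyc; simp; omega⟩
  · rcases le_total (k : ℕ) (l : ℕ) with h | h
    · obtain ⟨p, hp⟩ := exists_walk_a (n2 := n2) (n3 := n3) h1 (n1 - ((l:ℕ) - (k:ℕ))) l k
        (by rw [show (l:ℕ) + (n1 - ((l:ℕ) - (k:ℕ))) = n1 + (k:ℕ) by omega, Nat.add_mod_left,
               Nat.mod_eq_of_lt hk])
      exact ⟨p.reverse, by unfold cyc; simp; omega⟩
    · obtain ⟨p, hp⟩ := exists_walk_a (n2 := n2) (n3 := n3) h1 (n1 - ((k:ℕ) - (l:ℕ))) k l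
        (by rw [show (k:ℕ) + (n1 - ((k:ℕ) - (l:ℕ))) = n1 + (l:ℕ) by omega, Nat.add_mod_left,
               Nat.mod_eq_of_lt hl])
      exact ⟨p, by unfold cyc; omega⟩

lemma exists_walk_ab (h1 : 1 < n1) (m : Fin n2) :
    ∃ p : (GGraph n1 n2 n3).Walk (.a ⟨1, h1⟩) (.b m), p.length ≤ (m : ℕ) + 1 := by
  obtain ⟨mv, hmv⟩ := m
  induction mv with
  | zero =>
    have hadj : (GGraph n1 n2 n3).Adj (.a ⟨1, h1⟩) (.b ⟨0, hmv⟩) := by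
      rw [adj_iff]; exact ⟨by simp, Or.inl ⟨rfl, rfl⟩⟩
    exact ⟨.cons hadj .nil, by simp⟩
  | succ r ih =>
    obtain ⟨p, hp⟩ := ih (by omega)
    have hadj : (GGraph n1 n2 n3).Adj (.b ⟨r, by omega⟩) (.b ⟨r + 1, hmv⟩) := by
      rw [adj_iff]; exact ⟨by simp [Fin.ext_iff], Or.inl rfl⟩
    exact ⟨p.concat hadj, by simpa [SimpleGraph.Walk.length_concat] using hp⟩

lemma adj_ac (h : n1 - 1 < n1) : (GGraph n1 n2 n3).Adj (.a ⟨n1 - 1, h⟩) .c := by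
  rw [adj_iff]; exact ⟨by simp, Or.inl rfl⟩

lemma adj_ai (h : 0 < n1) : (GGraph n1 n2 n3).Adj (.a ⟨0, h⟩) .i := by
  rw [adj_iff]; exact ⟨by simp, Or.inl rfl⟩

lemma adj_ij (t : Fin n3) : (GGraph n1 n2 n3).Adj .i (.j t) := by
  rw [adj_iff]; exact ⟨by simp, Or.inl trivial⟩

lemma exists_walk_bb (h1 : 5 ≤ n1) :
    ∀ (d : ℕ) (m m' : Fin n2), (m' : ℕ) = (m : ℕ) + d →
      ∃ p : (GGraph n1 n2 n3).Walk (.b m) (.b m'), p.length ≤ d := by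
  intro d
  induction d with
  | zero =>
    intro m m' h
    have : m' = m := Fin.ext (by omega)
    subst this; exact ⟨.nil, by simp⟩
  | succ r ih =>
    intro m m' h
    have hlt : (m : ℕ) + 1 < n2 := by have := m'.isLt; omega
    obtain ⟨p, hp⟩ := ih ⟨(m : ℕ) + 1, hlt⟩ m' (by simpa using by omega)
    have hadj : (GGraph n1 n2 n3).Adj (.b m) (.b ⟨(m : ℕ) + 1, hlt⟩) := by
      rw [adj_iff]; exact ⟨by simp [Fin.ext_iff], Or.inl rfl⟩
    exact ⟨.cons hadj p, by simpa using hp⟩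

/-- abbreviation: there is a walk of length at most `d` -/
def Wk (u v : GVert n1 n2 n3) (d : ℕ) : Prop :=
  ∃ p : (GGraph n1 n2 n3).Walk u v, p.length ≤ d

lemma Wk.rev {u v : GVert n1 n2 n3} {d : ℕ} (h : Wk u v d) : Wk v u d := by
  obtain ⟨p, hp⟩ := h; exact ⟨p.reverse, by simpa using hp⟩

lemma Wk.trans {u v w : GVert n1 n2 n3} {d e : ℕ} (h : Wk u v d) (h' : Wk v w e) :
    Wk u w (d + e) := by
  obtain ⟨p, hp⟩ := h; obtain ⟨q, hq⟩ := h'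
  exact ⟨p.append q, by simp [SimpleGraph.Walk.length_append]; omega⟩

lemma Wk.mono {u v : GVert n1 n2 n3} {d e : ℕ} (h : Wk u v d) (hde : d ≤ e) : Wk u v e := by
  obtain ⟨p, hp⟩ := h; exact ⟨p, hp.trans hde⟩

lemma Wk.single {u v : GVert n1 n2 n3} (h : (GGraph n1 n2 n3).Adj u v) : Wk u v 1 :=
  ⟨.cons h .nil, by simp⟩

lemma wk_aa (h1 : 5 ≤ n1) (k l : Fin n1) :
    Wk (n2 := n2) (n3 := n3) (.a k) (.a l) (cyc n1 k l) := exists_walk_aa h1 k l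

lemma wk_bb (h1 : 5 ≤ n1) (m m' : Fin n2) :
    Wk (n1 := n1) (n3 := n3) (.b m) (.b m') (((m:ℕ) - m') + ((m':ℕ) - m)) := by
  rcases le_total (m : ℕ) (m' : ℕ) with h | h
  · have w : Wk (n1 := n1) (n3 := n3) (.b m) (.b m') ((m':ℕ) - (m:ℕ)) :=
      exists_walk_bb h1 ((m':ℕ) - (m:ℕ)) m m' (by omega)
    exact w.mono (by omega)
  · have w : Wk (n1 := n1) (n3 := n3) (.b m') (.b m) ((m:ℕ) - (m':ℕ)) :=
      exists_walk_bb h1 ((m:ℕ) - (m':ℕ)) m' m (by omega)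
    exact w.rev.mono (by omega)

lemma wk_le_Dv (h1 : 5 ≤ n1) (u v : GVert n1 n2 n3) : Wk u v (Dv u v) := by
  have hn0 : 0 < n1 := by omega
  have hn1 : 1 < n1 := by omega
  have hnn : n1 - 1 < n1 := by omega
  have wab : ∀ m : Fin n2, Wk (n1 := n1) (n3 := n3) (.a ⟨1, hn1⟩) (.b m) ((m : ℕ) + 1) :=
    exists_walk_ab hn1
  have wac : Wk (n2 := n2) (n3 := n3) (.a ⟨n1 - 1, hnn⟩) .c 1 := Wk.single (adj_ac hnn)
  have wai : Wk (n2 := n2) (n3 := n3) (.a ⟨0, hn0⟩) .i 1 := Wk.single (adj_ai hn0)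
  have wij : ∀ t : Fin n3, Wk (n1 := n1) (n2 := n2) .i (.j t) 1 := fun t => Wk.single (adj_ij t)
  have hvm : ∀ (x : ℕ) (h : x < n1), ((⟨x, h⟩ : Fin n1) : ℕ) = x := fun _ _ => rfl
  have hc01 : cyc n1 0 1 = 1 := by unfold cyc; omega
  have hc10 : cyc n1 1 0 = 1 := by unfold cyc; omega
  have hc0n : cyc n1 0 (n1 - 1) = 1 := by unfold cyc; omega
  have hcn0 : cyc n1 (n1 - 1) 0 = 1 := by unfold cyc; omega
  have hc1n : cyc n1 1 (n1 - 1) = 2 := by unfold cyc; omega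
  have hcn1 : cyc n1 (n1 - 1) 1 = 2 := by unfold cyc; omega
  rcases u with k | m | _ | _ | t <;> rcases v with l | m' | _ | _ | s <;>
    simp only [Dv]
  · exact wk_aa h1 k l
  · exact ((wk_aa h1 k ⟨1, hn1⟩).trans (wab m')).mono
      (by simp only [hvm]; omega)
  · exact ((wk_aa h1 k ⟨n1 - 1, hnn⟩).trans wac).mono (by simp only [hvm]; omega)
  · exact ((wk_aa h1 k ⟨0, hn0⟩).trans wai).mono (by simp only [hvm]; omega)
  · exact (((wk_aa h1 k ⟨0, hn0⟩).trans wai).trans (wij s)).mono (by simp only [hvm]; omega)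
  · exact (((wab m).rev.trans (wk_aa h1 ⟨1, hn1⟩ l))).mono (by simp only [hvm, cyc_comm n1 1]; omega)
  · exact wk_bb h1 m m'
  · exact ((((wab m).rev.trans (wk_aa h1 ⟨1, hn1⟩ ⟨n1 - 1, hnn⟩)).trans wac)).mono
      (by simp only [hvm, hc1n]; omega)
  · exact ((((wab m).rev.trans (wk_aa h1 ⟨1, hn1⟩ ⟨0, hn0⟩)).trans wai)).mono
      (by simp only [hvm, hc10]; omega)
  · exact (((((wab m).rev.trans (wk_aa h1 ⟨1, hn1⟩ ⟨0, hn0⟩)).trans wai)).trans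
      (wij s)).mono (by simp only [hvm, hc10]; omega)
  · exact ((wac.rev.trans (wk_aa h1 ⟨n1 - 1, hnn⟩ l))).mono (by simp only [hvm, cyc_comm n1 (n1-1)]; omega)
  · exact ((((wac.rev.trans (wk_aa h1 ⟨n1 - 1, hnn⟩ ⟨1, hn1⟩)).trans (wab m')))).mono
      (by simp only [hvm, hcn1]; omega)
  · exact ⟨.nil, by simp⟩
  · exact (((wac.rev.trans (wk_aa h1 ⟨n1 - 1, hnn⟩ ⟨0, hn0⟩)).trans wai)).mono
      (by simp only [hvm, hcn0]; omega)
  · exact ((((wac.rev.trans (wk_aa h1 ⟨n1 - 1, hnn⟩ ⟨0, hn0⟩)).trans wai)).trans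
      (wij s)).mono (by simp only [hvm, hcn0]; omega)
  · exact ((wai.rev.trans (wk_aa h1 ⟨0, hn0⟩ l))).mono (by simp only [hvm, cyc_comm n1 0]; omega)
  · exact (((wai.rev.trans (wk_aa h1 ⟨0, hn0⟩ ⟨1, hn1⟩)).trans (wab m'))).mono
      (by simp only [hvm, hc01]; omega)
  · exact (((wai.rev.trans (wk_aa h1 ⟨0, hn0⟩ ⟨n1 - 1, hnn⟩)).trans wac)).mono
      (by simp only [hvm, hc0n]; omega)
  · exact ⟨.nil, by simp⟩
  · exact wij s
  · exact (((wij t).rev.trans (wai.rev.trans (wk_aa h1 ⟨0, hn0⟩ l)))).mono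
      (by simp only [hvm, cyc_comm n1 0]; omega)
  · exact ((((wij t).rev.trans wai.rev).trans ((wk_aa h1 ⟨0, hn0⟩ ⟨1, hn1⟩).trans
      (wab m')))).mono (by simp only [hvm, hc01]; omega)
  · exact ((((wij t).rev.trans wai.rev).trans ((wk_aa h1 ⟨0, hn0⟩ ⟨n1 - 1, hnn⟩).trans
      wac))).mono (by simp only [hvm, hc0n]; omega)
  · exact (wij t).rev
  · rcases eq_or_ne t s with rfl | hts
    · exact ⟨SimpleGraph.Walk.nil, by simp⟩
    · exact (((wij t).rev.trans (wij s)).mono (by simp [hts]))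
lemma lip (h1 : 5 ≤ n1) {u w : GVert n1 n2 n3} (h : GRel n1 n2 n3 u w) (v : GVert n1 n2 n3) :
    Dv u v ≤ Dv w v + 1 ∧ Dv w v ≤ Dv u v + 1 := by
  rcases u with k | m | _ | _ | t <;> rcases w with l | m' | _ | _ | s <;>
      simp only [GRel] at h <;> try exact h.elim
  · -- cycle edge
    have hk := k.isLt; have hl := l.isLt
    have hd : (l : ℕ) = (k : ℕ) + 1 ∨ ((k : ℕ) = n1 - 1 ∧ (l : ℕ) = 0) := by
      rcases Nat.lt_or_ge ((k : ℕ) + 1) n1 with h' | h'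
      · left; rw [h, Nat.mod_eq_of_lt h']
      · right
        have he : (k : ℕ) + 1 = n1 := by omega
        rw [h, he, Nat.mod_self]; omega
    rcases v with x | mm | _ | _ | ss <;> simp only [Dv] <;>
      [skip; skip; skip; skip; skip] <;>
      (try have hx := x.isLt) <;> unfold cyc <;> omega
  · -- edge a1 b0
    obtain ⟨hk1, hm0⟩ := h
    have hk := k.isLt
    rcases v with x | mm | _ | _ | ss <;> simp only [Dv] <;>
      (try have hx := x.isLt) <;> unfold cyc <;> omega
  · -- edge a_{n1-1} c
    have hk := k.isLt
    rcases v with x | mm | _ | _ | ss <;> simp only [Dv] <;>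
      (try have hx := x.isLt) <;> unfold cyc <;> omega
  · -- edge a_0 i
    have hk := k.isLt
    rcases v with x | mm | _ | _ | ss <;> simp only [Dv] <;>
      (try have hx := x.isLt) <;> unfold cyc <;> omega
  · -- path edge b b
    rcases v with x | mm | _ | _ | ss <;> simp only [Dv] <;>
      (try have hx := x.isLt) <;> (first | (unfold cyc; omega) | omega)
  · -- pendant edge i j
    rcases v with x | mm | _ | _ | ss <;> simp only [Dv]
    · have hx := x.isLt; unfold cyc; omega
    · omega
    · omega
    · omega
    · rcases eq_or_ne s ss with rfl | hne
      · simp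
      · simp [hne]

lemma Dv_le_length (h1 : 5 ≤ n1) {u v : GVert n1 n2 n3} (p : (GGraph n1 n2 n3).Walk u v) :
    Dv u v ≤ p.length := by
  induction p with
  | nil => simp [Dv_self]
  | @cons u u' v' hadj q ih =>
    rw [adj_iff] at hadj
    have h1' : Dv u v' ≤ Dv u' v' + 1 := by
      rcases hadj.2 with hr | hr
      · exact (lip h1 hr v').1
      · exact (lip h1 hr v').2
    simpa using h1'.trans (by omega)

lemma dist_eq (h1 : 5 ≤ n1) (u v : GVert n1 n2 n3) :
    (GGraph n1 n2 n3).dist u v = Dv u v := by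
  obtain ⟨p, hp⟩ := wk_le_Dv h1 u v
  refine le_antisymm ((SimpleGraph.dist_le p).trans hp) ?_
  obtain ⟨q, hq⟩ := SimpleGraph.Reachable.exists_walk_length_eq_dist ⟨p⟩
  exact hq ▸ Dv_le_length h1 q

end

section
variable {n1 n2 n3 : ℕ}

lemma cyc_resolve_a (h1 : 5 ≤ n1) {k l : ℕ} (hk : k < n1) (hl : l < n1) (hkl : k ≠ l) :
    cyc n1 k 0 ≠ cyc n1 l 0 ∨ cyc n1 k 1 ≠ cyc n1 l 1 := by unfold cyc; omega

lemma cyc_lip01 (h1 : 5 ≤ n1) {k : ℕ} (hk : k < n1) :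
    cyc n1 k 0 ≤ cyc n1 k 1 + 1 ∧ cyc n1 k 1 ≤ cyc n1 k 0 + 1 := by unfold cyc; omega

lemma cyc_collision (h1 : 5 ≤ n1) (heven : Even n1) {k : ℕ} (hk : k < n1) :
    cyc n1 2 k = cyc n1 (n1-2) k ∨ cyc n1 2 k = cyc n1 k 1 + 1 ∨
    cyc n1 2 k = cyc n1 k (n1-1) + 1 ∨ cyc n1 (n1-2) k = cyc n1 k 1 + 1 ∨
    cyc n1 (n1-2) k = cyc n1 k (n1-1) + 1 ∨ cyc n1 k 1 = cyc n1 k (n1-1) := by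
  obtain ⟨h, rfl⟩ := heven
  unfold cyc; omega

/-- the resolving set used for the upper bound -/
lemma gen_upper (h1 : 5 ≤ n1) (h2 : 1 ≤ n2) (h3 : 2 ≤ n3) :
    IsMetricGenerator (GGraph n1 n2 n3)
      (insert .c (insert (.b ⟨0, h2⟩)
        (Set.range fun t : Fin (n3-1) => (.j ⟨t, by omega⟩ : GVert n1 n2 n3)))) := by
  intro u v huv
  set S : Set (GVert n1 n2 n3) :=
    insert .c (insert (.b ⟨0, h2⟩)
      (Set.range fun t : Fin (n3-1) => (.j ⟨t, by omega⟩ : GVert n1 n2 n3))) with hS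
  suffices hzz : ∃ z ∈ S, Dv u z ≠ Dv v z by
    obtain ⟨z, hz, hne⟩ := hzz
    exact ⟨z, hz, by rw [dist_eq h1, dist_eq h1]; exact hne⟩
  have hcS : (.c : GVert n1 n2 n3) ∈ S := Set.mem_insert _ _
  have hb0S : (.b ⟨0, h2⟩ : GVert n1 n2 n3) ∈ S :=
    Set.mem_insert_of_mem _ (Set.mem_insert _ _)
  have hj0S : (.j ⟨0, by omega⟩ : GVert n1 n2 n3) ∈ S :=
    Set.mem_insert_of_mem _ (Set.mem_insert_of_mem _ ⟨⟨0, by omega⟩, rfl⟩)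
  by_cases hu : u ∈ S
  · refine ⟨u, hu, ?_⟩
    have h0 := Dv_self u
    have hpos := Dv_pos h1 (n2 := n2) (Ne.symm huv)
    omega
  by_cases hv : v ∈ S
  · refine ⟨v, hv, ?_⟩
    have h0 := Dv_self v
    have hpos := Dv_pos h1 (n2 := n2) huv
    omega
  -- facts about vertices not in S
  have hbfact : ∀ m : Fin n2, (.b m : GVert n1 n2 n3) ∉ S → (m : ℕ) ≠ 0 := by
    intro m hm h0
    apply hm
    have : m = (⟨0, h2⟩ : Fin n2) := Fin.ext h0
    rw [this]; exact hb0S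
  have hjfact : ∀ t : Fin n3, (.j t : GVert n1 n2 n3) ∉ S → (t : ℕ) = n3 - 1 := by
    intro t ht
    by_contra hne
    have hlt : (t : ℕ) < n3 - 1 := by have := t.isLt; omega
    apply ht
    refine Set.mem_insert_of_mem _ (Set.mem_insert_of_mem _ ⟨⟨(t : ℕ), hlt⟩, ?_⟩)
    simp [Fin.ext_iff]
  have hval0 : ((⟨0, h2⟩ : Fin n2) : ℕ) = 0 := rfl
  rcases u with k | m | _ | _ | t <;> rcases v with l | m' | _ | _ | s
  · -- a a
    have hkl : (k : ℕ) ≠ (l : ℕ) := fun he => huv (by rw [show k = l from Fin.ext he])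
    rcases cyc_resolve_a h1 k.isLt l.isLt hkl with hx | hx
    · exact ⟨_, hj0S, by simp only [Dv]; omega⟩
    · exact ⟨_, hb0S, by simp only [Dv, hval0]; omega⟩
  · -- a b
    have hm' := hbfact m' hv
    by_cases hca : cyc n1 (k : ℕ) 0 + 2 = (m' : ℕ) + 4
    · refine ⟨_, hb0S, ?_⟩
      simp only [Dv, hval0]
      have := cyc_lip01 h1 (k := (k : ℕ)) k.isLt
      omega
    · exact ⟨_, hj0S, by simp only [Dv]; omega⟩
  · exact absurd hcS hv
  · exact ⟨_, hj0S, by simp only [Dv]; omega⟩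
  · -- a j
    have hs := hjfact s hv
    by_cases hk0 : (k : ℕ) = 0
    · refine ⟨_, hcS, ?_⟩
      simp only [Dv]; unfold cyc; omega
    · refine ⟨_, hj0S, ?_⟩
      have hne : ¬ s = (⟨0, by omega⟩ : Fin n3) := by
        intro he; rw [he] at hs; simp at hs; omega
      simp only [Dv, if_neg hne]
      have := k.isLt
      unfold cyc; omega
  · -- b a
    have hm := hbfact m hu
    by_cases hca : cyc n1 (l : ℕ) 0 + 2 = (m : ℕ) + 4
    · refine ⟨_, hb0S, ?_⟩
      simp only [Dv, hval0]
      have := cyc_lip01 h1 (k := (l : ℕ)) l.isLt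
      omega
    · exact ⟨_, hj0S, by simp only [Dv]; omega⟩
  · -- b b
    have hmm : (m : ℕ) ≠ (m' : ℕ) := fun he => huv (by rw [show m = m' from Fin.ext he])
    exact ⟨_, hb0S, by simp only [Dv, hval0]; omega⟩
  · exact absurd hcS hv
  · exact ⟨_, hj0S, by simp only [Dv]; omega⟩
  · exact ⟨_, hj0S, by simp only [Dv]; split <;> omega⟩
  · exact absurd hcS hu
  · exact absurd hcS hu
  · exact absurd hcS hu
  · exact absurd hcS hu
  · exact absurd hcS hu
  · exact ⟨_, hj0S, by simp only [Dv]; omega⟩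
  · exact ⟨_, hj0S, by simp only [Dv]; omega⟩
  · exact absurd hcS hv
  · exact absurd rfl huv
  · exact ⟨_, hj0S, by simp only [Dv]; split <;> omega⟩
  · -- j a
    have ht := hjfact t hu
    by_cases hl0 : (l : ℕ) = 0
    · refine ⟨_, hcS, ?_⟩
      simp only [Dv]; unfold cyc; omega
    · refine ⟨_, hj0S, ?_⟩
      have hne : ¬ t = (⟨0, by omega⟩ : Fin n3) := by
        intro he; rw [he] at ht; simp at ht; omega
      simp only [Dv, if_neg hne]
      have := l.isLt
      unfold cyc; omega
  · exact ⟨_, hj0S, by simp only [Dv]; split <;> omega⟩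
  · exact absurd hcS hv
  · exact ⟨_, hj0S, by simp only [Dv]; split <;> omega⟩
  · -- j j
    have ht := hjfact t hu
    have hs := hjfact s hv
    exact absurd (show (.j t : GVert n1 n2 n3) = .j s by rw [show t = s from Fin.ext (by omega)])
      huv

/-- the lower bound -/
lemma gen_lower (h1 : 5 ≤ n1) (heven : Even n1) (h2 : 1 ≤ n2) (h3 : 2 ≤ n3)
    (T : Set (GVert n1 n2 n3)) (hTf : T.Finite)
    (hTg : IsMetricGenerator (GGraph n1 n2 n3) T) : n3 + 1 ≤ T.ncard := by
  by_contra hcon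
  have hTc : T.ncard ≤ n3 := by omega
  set R : Set (GVert n1 n2 n3) := Set.range GVert.j with hR
  have hjinj : Function.Injective (GVert.j : Fin n3 → GVert n1 n2 n3) :=
    fun x y h => by simpa using h
  -- step 1 : at most one leaf missing from T
  have hstep1 : ∀ s t : Fin n3, s ≠ t → (.j s : GVert n1 n2 n3) ∈ T ∨ (.j t : GVert n1 n2 n3) ∈ T := by
    intro s t hst
    by_contra hc
    push_neg at hc
    obtain ⟨hs, ht⟩ := hc
    obtain ⟨z, hzT, hzne⟩ := hTg (.j s) (.j t) (by simpa using hst)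
    rw [dist_eq h1, dist_eq h1] at hzne
    apply hzne
    have hzs : z ≠ .j s := fun he => hs (he ▸ hzT)
    have hzt : z ≠ .j t := fun he => ht (he ▸ hzT)
    rcases z with k | m | _ | _ | x
    · rfl
    · rfl
    · rfl
    · rfl
    · have hsx : ¬ s = x := fun he => hzs (by rw [he])
      have htx : ¬ t = x := fun he => hzt (by rw [he])
      simp only [Dv, if_neg hsx, if_neg htx]
  have hone : ∃ t0 : Fin n3, ∀ t : Fin n3, t ≠ t0 → (.j t : GVert n1 n2 n3) ∈ T := by
    by_cases hall : ∀ t : Fin n3, (.j t : GVert n1 n2 n3) ∈ T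
    · exact ⟨⟨0, by omega⟩, fun t _ => hall t⟩
    · push_neg at hall
      obtain ⟨t0, ht0⟩ := hall
      exact ⟨t0, fun t htne => (hstep1 t t0 htne).resolve_right ht0⟩
  obtain ⟨t0, ht0⟩ := hone
  -- step 2 : counting
  have hTsplit := Set.ncard_inter_add_ncard_diff_eq_ncard T R hTf
  have hsub : GVert.j '' {t | t ≠ t0} ⊆ T ∩ R := by
    rintro x ⟨t, ht, rfl⟩
    exact ⟨ht0 t ht, ⟨t, rfl⟩⟩
  have himg : ((GVert.j '' {t | t ≠ t0}) : Set (GVert n1 n2 n3)).ncard = n3 - 1 := by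
    rw [Set.ncard_image_of_injective _ hjinj]
    have hins : (Set.univ : Set (Fin n3)) = insert t0 {t | t ≠ t0} := by
      ext x; by_cases hx : x = t0 <;> simp [hx]
    have h4 : (Set.univ : Set (Fin n3)).ncard = n3 := by
      rw [Set.ncard_univ]; simp
    rw [hins, Set.ncard_insert_of_notMem (by simp)] at h4
    omega
  have h2a : n3 - 1 ≤ (T ∩ R).ncard :=
    himg ▸ Set.ncard_le_ncard hsub (hTf.inter_of_left R)
  have h2b : (T \ R).ncard ≤ 1 := by omega
  -- step 3 : at most one non-leaf in T
  obtain ⟨z0, hz0prop⟩ : ∃ z0 : GVert n1 n2 n3, ∀ y ∈ T, y ∉ R → y = z0 := by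
    rcases Set.eq_empty_or_nonempty (T \ R) with he | ⟨z0, hz0⟩
    · refine ⟨.c, fun y hy hyR => ?_⟩
      have : y ∈ T \ R := ⟨hy, hyR⟩
      rw [he] at this
      exact this.elim
    · refine ⟨z0, fun y hy hyR => ?_⟩
      by_contra hne
      have hpair : ({y, z0} : Set (GVert n1 n2 n3)) ⊆ T \ R := by
        rintro w (rfl | rfl)
        · exact ⟨hy, hyR⟩
        · exact hz0
      have hle : ({y, z0} : Set (GVert n1 n2 n3)).ncard ≤ (T \ R).ncard :=
        Set.ncard_le_ncard hpair hTf.diff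
      rw [Set.ncard_pair hne] at hle
      omega
  -- step 4 : a fooling pair for z0
  have h6 : 6 ≤ n1 := by
    obtain ⟨h, rfl⟩ := heven; omega
  have hcol : ∃ p q : GVert n1 n2 n3, p ≠ q ∧ Dv p z0 = Dv q z0 ∧
      ∀ x : Fin n3, Dv p (.j x) = Dv q (.j x) := by
    have h2lt : (2 : ℕ) < n1 := by omega
    have hnlt : n1 - 2 < n1 := by omega
    rcases z0 with k | m | _ | _ | x
    · rcases cyc_collision h1 heven k.isLt with hx | hx | hx | hx | hx | hx
      · exact ⟨.a ⟨2, h2lt⟩, .a ⟨n1-2, hnlt⟩, by simp [Fin.ext_iff]; omega,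
          hx, fun x => by show cyc n1 2 0 + 2 = cyc n1 (n1-2) 0 + 2; unfold cyc; omega⟩
      · exact ⟨.a ⟨2, h2lt⟩, .b ⟨0, h2⟩, by simp,
          by show cyc n1 2 (k:ℕ) = cyc n1 (k:ℕ) 1 + 0 + 1; omega,
          fun x => by show cyc n1 2 0 + 2 = 0 + 4; unfold cyc; omega⟩
      · exact ⟨.a ⟨2, h2lt⟩, .c, by simp,
          by show cyc n1 2 (k:ℕ) = cyc n1 (k:ℕ) (n1-1) + 1; omega,
          fun x => by show cyc n1 2 0 + 2 = 4; unfold cyc; omega⟩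
      · exact ⟨.a ⟨n1-2, hnlt⟩, .b ⟨0, h2⟩, by simp,
          by show cyc n1 (n1-2) (k:ℕ) = cyc n1 (k:ℕ) 1 + 0 + 1; omega,
          fun x => by show cyc n1 (n1-2) 0 + 2 = 0 + 4; unfold cyc; omega⟩
      · exact ⟨.a ⟨n1-2, hnlt⟩, .c, by simp,
          by show cyc n1 (n1-2) (k:ℕ) = cyc n1 (k:ℕ) (n1-1) + 1; omega,
          fun x => by show cyc n1 (n1-2) 0 + 2 = 4; unfold cyc; omega⟩
      · exact ⟨.b ⟨0, h2⟩, .c, by simp,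
          by show cyc n1 (k:ℕ) 1 + 0 + 1 = cyc n1 (k:ℕ) (n1-1) + 1; omega,
          fun x => by show (0:ℕ) + 4 = 4; omega⟩
    · exact ⟨.a ⟨n1-2, hnlt⟩, .c, by simp,
        by show cyc n1 (n1-2) 1 + (m:ℕ) + 1 = (m:ℕ) + 4; unfold cyc; omega,
        fun x => by show cyc n1 (n1-2) 0 + 2 = 4; unfold cyc; omega⟩
    · exact ⟨.a ⟨2, h2lt⟩, .b ⟨0, h2⟩, by simp,
        by show cyc n1 2 (n1-1) + 1 = 0 + 4; unfold cyc; omega,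
        fun x => by show cyc n1 2 0 + 2 = 0 + 4; unfold cyc; omega⟩
    · exact ⟨.a ⟨2, h2lt⟩, .a ⟨n1-2, hnlt⟩, by simp [Fin.ext_iff]; omega,
        by show cyc n1 2 0 + 1 = cyc n1 (n1-2) 0 + 1; unfold cyc; omega,
        fun x => by show cyc n1 2 0 + 2 = cyc n1 (n1-2) 0 + 2; unfold cyc; omega⟩
    · exact ⟨.a ⟨2, h2lt⟩, .a ⟨n1-2, hnlt⟩, by simp [Fin.ext_iff]; omega,
        by show cyc n1 2 0 + 2 = cyc n1 (n1-2) 0 + 2; unfold cyc; omega,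
        fun x => by show cyc n1 2 0 + 2 = cyc n1 (n1-2) 0 + 2; unfold cyc; omega⟩
  obtain ⟨p, q, hpq, hpz, hpleaf⟩ := hcol
  obtain ⟨z, hzT, hzne⟩ := hTg p q hpq
  rw [dist_eq h1, dist_eq h1] at hzne
  apply hzne
  by_cases hzR : z ∈ R
  · obtain ⟨x, rfl⟩ := hzR
    exact hpleaf x
  · rw [hz0prop z hzT hzR]
    exact hpz

end

/-- Lemma 3 (even case): if `n1` is even then `dim(G_{n1,n2,n3}) = n3 + 1`. -/
theorem metricDim_GGraph_even (n1 n2 n3 : ℕ) (h1 : 5 ≤ n1) (heven : Even n1)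
    (h2 : 1 ≤ n2) (h3 : 2 ≤ n3) :
    metricDim (GGraph n1 n2 n3) = n3 + 1 := by
  set f : Fin (n3-1) → GVert n1 n2 n3 := fun t => (.j ⟨t, by omega⟩ : GVert n1 n2 n3) with hf
  set S : Set (GVert n1 n2 n3) := insert .c (insert (.b ⟨0, h2⟩) (Set.range f)) with hS
  have hfinj : Function.Injective f := by
    intro x y h
    simp only [hf, GVert.j.injEq, Fin.mk.injEq] at h
    exact Fin.ext h
  have hSfin : S.Finite := ((Set.finite_range f).insert _).insert _
  have hnotb : (.b ⟨0, h2⟩ : GVert n1 n2 n3) ∉ Set.range f := by simp [hf]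
  have hnotc : (.c : GVert n1 n2 n3) ∉ insert (.b ⟨0, h2⟩) (Set.range f) := by simp [hf]
  have hrange : (Set.range f).ncard = n3 - 1 := by
    rw [← Set.image_univ, Set.ncard_image_of_injective _ hfinj, Set.ncard_univ,
      Nat.card_eq_fintype_card, Fintype.card_fin]
  have hcard : S.ncard = n3 + 1 := by
    rw [hS, Set.ncard_insert_of_notMem hnotc ((Set.finite_range f).insert _),
      Set.ncard_insert_of_notMem hnotb (Set.finite_range f), hrange]
    omega
  have hgen : IsMetricGenerator (GGraph n1 n2 n3) S := gen_upper h1 h2 h3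
  have hmem : n3 + 1 ∈ {n | ∃ S : Set (GVert n1 n2 n3), S.Finite ∧
      IsMetricGenerator (GGraph n1 n2 n3) S ∧ S.ncard = n} := ⟨S, hSfin, hgen, hcard⟩
  refine le_antisymm (Nat.sInf_le hmem) ?_
  obtain ⟨T, hTf, hTg, hTc⟩ := Nat.sInf_mem (⟨n3 + 1, hmem⟩ : Set.Nonempty _)
  rw [metricDim, ← hTc]
  exact gen_lower h1 heven h2 h3 T hTf hTg
end

section
/- Let n1 ≥ 5 be even, n2 ≥ 1 and n3 ≥ 2. Then the edge metric dimension of G_{n1,n2,n3} equals n3. -/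
lemma walk_lb {V : Type*} {G : SimpleGraph V} (φ : V → ℕ) {z : V}
    (h0 : φ z = 0) (hdown : ∀ u v : V, G.Adj u v → φ u ≤ φ v + 1) :
    ∀ {u : V} (p : G.Walk u z), φ u ≤ p.length := by
  intro u p
  induction p with
  | nil => simp [h0]
  | cons h p ih => simpa using le_trans (hdown _ _ h) (by omega)

lemma dist_eq_phi {V : Type*} {G : SimpleGraph V} (φ : V → ℕ) (z : V)
    (h0 : ∀ u, φ u = 0 ↔ u = z)
    (hup : ∀ u, φ u ≠ 0 → ∃ v, G.Adj u v ∧ φ v < φ u)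
    (hdown : ∀ u v, G.Adj u v → φ u ≤ φ v + 1) :
    ∀ u, G.dist u z = φ u := by
  have key : ∀ n u, φ u ≤ n → ∃ p : G.Walk u z, p.length ≤ φ u := by
    intro n
    induction n with
    | zero =>
      intro u hu
      have : u = z := (h0 u).mp (Nat.le_zero.mp hu)
      subst this; exact ⟨.nil, by simp⟩
    | succ n ih =>
      intro u hu
      by_cases h : φ u = 0
      · have : u = z := (h0 u).mp h
        subst this; exact ⟨.nil, by simp⟩
      · obtain ⟨v, hadj, hlt⟩ := hup u h
        obtain ⟨p, hp⟩ := ih v (by omega)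
        exact ⟨.cons hadj p, by simp; omega⟩
  intro u
  obtain ⟨p, hp⟩ := key (φ u) u le_rfl
  have hub : G.dist u z ≤ φ u := le_trans (SimpleGraph.dist_le p) hp
  have hreach : G.Reachable u z := ⟨p⟩
  obtain ⟨q, hq⟩ := hreach.exists_walk_length_eq_dist
  have := walk_lb φ ((h0 z).mpr rfl) hdown q
  omega

namespace EMD

def phiI (n1 n2 n3 : ℕ) : GVert n1 n2 n3 → ℕ
  | .a k => 1 + min (k:ℕ) (n1 - k)
  | .b m => 3 + (m:ℕ)
  | .c => 3
  | .i => 0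
  | .j _ => 1

def phiX (n1 n2 n3 : ℕ) : GVert n1 n2 n3 → ℕ
  | .a k => min (((k:ℕ) - (n1/2+1)) + ((n1/2+1) - (k:ℕ)))
      (n1 - (((k:ℕ) - (n1/2+1)) + ((n1/2+1) - (k:ℕ))))
  | .b _m => n1/2 + 1 + (_m:ℕ)
  | .c => n1/2 - 1
  | .i => n1/2
  | .j _ => n1/2 + 1

variable {n1 n2 n3 : ℕ}

lemma adj_iff {u v : GVert n1 n2 n3} :
    (GGraph n1 n2 n3).Adj u v ↔ u ≠ v ∧ (GRel n1 n2 n3 u v ∨ GRel n1 n2 n3 v u) :=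
  SimpleGraph.fromRel_adj _ u v

lemma mod_cases {k n : ℕ} (h : k < n) :
    ((k+1) % n = k+1 ∧ k+1 < n) ∨ ((k+1) % n = 0 ∧ k + 1 = n) := by
  rcases Nat.lt_or_ge (k+1) n with h' | h'
  · exact Or.inl ⟨Nat.mod_eq_of_lt h', h'⟩
  · have : k + 1 = n := by omega
    subst this
    exact Or.inr ⟨Nat.mod_self _, rfl⟩

lemma adj_aa (h5 : 5 ≤ n1) {k l : Fin n1}
    (h : (l:ℕ) = (k:ℕ)+1 ∨ ((k:ℕ)+1 = n1 ∧ (l:ℕ) = 0) ∨ (k:ℕ) = (l:ℕ)+1 ∨ ((l:ℕ)+1 = n1 ∧ (k:ℕ) = 0)) :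
    (GGraph n1 n2 n3).Adj (.a k) (.a l) := by
  have hk := k.isLt; have hl := l.isLt
  rw [adj_iff]
  refine ⟨by simp [GVert.a.injEq, Fin.ext_iff]; omega, ?_⟩
  rcases h with h | ⟨h, h'⟩ | h | ⟨h, h'⟩
  · exact Or.inl (by simp [GRel]; rw [Nat.mod_eq_of_lt (by omega)]; omega)
  · exact Or.inl (by simp [GRel]; rw [h, Nat.mod_self]; omega)
  · exact Or.inr (by simp [GRel]; rw [Nat.mod_eq_of_lt (by omega)]; omega)
  · exact Or.inr (by simp [GRel]; rw [h, Nat.mod_self]; omega)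

lemma phiI_zero : ∀ u : GVert n1 n2 n3, phiI n1 n2 n3 u = 0 ↔ u = .i := by
  rintro (k | m | _ | _ | t) <;> simp [phiI]

lemma phiI_up (h1 : 5 ≤ n1) : ∀ u : GVert n1 n2 n3, phiI n1 n2 n3 u ≠ 0 →
    ∃ v, (GGraph n1 n2 n3).Adj u v ∧ phiI n1 n2 n3 v < phiI n1 n2 n3 u := by
  rintro (k | m | _ | _ | t) h
  · -- a k
    have hk := k.isLt
    rcases Nat.eq_zero_or_pos (k:ℕ) with h0 | h0
    · refine ⟨.i, ?_, ?_⟩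
      · rw [adj_iff]
        exact ⟨by simp, Or.inl (by simpa [GRel] using h0)⟩
      · simp [phiI]
    · rcases le_or_gt (k:ℕ) (n1 - k) with hle | hlt
      · refine ⟨.a ⟨(k:ℕ) - 1, by omega⟩, adj_aa h1 (by simp; try omega), ?_⟩
        simp only [phiI]; simp +arith; try omega
      · rcases Nat.lt_or_ge ((k:ℕ)+1) n1 with hk1 | hk1
        · refine ⟨.a ⟨(k:ℕ) + 1, hk1⟩, adj_aa h1 (by simp; try omega), ?_⟩
          simp only [phiI]; simp +arith; try omega
        · refine ⟨.a ⟨0, by omega⟩, adj_aa h1 (by simp; try omega), ?_⟩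
          simp only [phiI]; simp +arith; try omega
  · -- b m
    rcases Nat.eq_zero_or_pos (m:ℕ) with h0 | h0
    · refine ⟨.a ⟨1, by omega⟩, ?_, ?_⟩
      · rw [adj_iff]
        exact ⟨by simp, Or.inr (by simp [GRel]; omega)⟩
      · simp only [phiI]; simp +arith; try omega
    · refine ⟨.b ⟨(m:ℕ) - 1, by omega⟩, ?_, ?_⟩
      · rw [adj_iff]
        refine ⟨by simp [GVert.b.injEq, Fin.ext_iff]; omega, Or.inr (by simp [GRel]; omega)⟩
      · simp only [phiI]; simp +arith; try omega
  · -- c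
    refine ⟨.a ⟨n1 - 1, by omega⟩, ?_, ?_⟩
    · rw [adj_iff]
      exact ⟨by simp, Or.inr (by simp [GRel])⟩
    · simp only [phiI]; simp +arith; try omega
  · simp [phiI] at h
  · -- j t
    refine ⟨.i, ?_, ?_⟩
    · rw [adj_iff]
      exact ⟨by simp, Or.inr (by simp [GRel])⟩
    · simp [phiI]

lemma phiI_down (h1 : 5 ≤ n1) : ∀ u v : GVert n1 n2 n3, (GGraph n1 n2 n3).Adj u v →
    phiI n1 n2 n3 u ≤ phiI n1 n2 n3 v + 1 := by
  intro u v hadj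
  rw [adj_iff] at hadj
  obtain ⟨hne, h | h⟩ := hadj <;>
    rcases u with k | m | _ | _ | t <;> rcases v with l | m' | _ | _ | t' <;>
      simp [GRel] at h <;> simp only [phiI] <;> try omega
  · rcases mod_cases k.isLt with ⟨he, hl⟩ | ⟨he, hl⟩ <;> rw [he] at h <;> omega
  · rcases mod_cases l.isLt with ⟨he, hl⟩ | ⟨he, hl⟩ <;> rw [he] at h <;> omega



lemma distI (h1 : 5 ≤ n1) : ∀ u, (GGraph n1 n2 n3).dist u .i = phiI n1 n2 n3 u :=
  dist_eq_phi _ _ phiI_zero (phiI_up h1) (phiI_down h1)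

lemma distX (h1 : 5 ≤ n1) (he : n1 % 2 = 0) :
    ∀ u, (GGraph n1 n2 n3).dist u (.a ⟨n1/2+1, by omega⟩) = phiX n1 n2 n3 u := by
  apply dist_eq_phi
  · intro u
    match u with
    | .a k =>
      have hk := k.isLt
      simp only [phiX, GVert.a.injEq, Fin.ext_iff]
      simp
      omega
    | .b m => simp [phiX]; try omega
    | .c => simp [phiX]; try omega
    | .i => simp [phiX]; try omega
    | .j t => simp [phiX]; try omega
  · rintro (k | m | _ | _ | t) h
    · -- a k
      have hk := k.isLt
      rcases Nat.eq_zero_or_pos (k:ℕ) with h0 | h0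
      · refine ⟨.a ⟨n1-1, by omega⟩, adj_aa h1 (by simp; try omega), ?_⟩
        simp only [phiX] at h ⊢; simp +arith; try omega
      · rcases Nat.lt_or_ge (k:ℕ) (n1/2+1) with hlt | hge
        · refine ⟨.a ⟨(k:ℕ)+1, by omega⟩, adj_aa h1 (by simp; try omega), ?_⟩
          simp only [phiX] at h ⊢; simp +arith; try omega
        · have hgt : n1/2+1 < (k:ℕ) := by
            rcases Nat.lt_or_ge (n1/2+1) (k:ℕ) with h' | h'
            · exact h'
            · exfalso; apply h; simp only [phiX]
              have : (k:ℕ) = n1/2+1 := by omega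
              simp [this]
          refine ⟨.a ⟨(k:ℕ)-1, by omega⟩, adj_aa h1 (by simp; try omega), ?_⟩
          simp only [phiX] at h ⊢; simp +arith; try omega
    · -- b m
      rcases Nat.eq_zero_or_pos (m:ℕ) with h0 | h0
      · refine ⟨.a ⟨1, by omega⟩, ?_, ?_⟩
        · rw [adj_iff]
          exact ⟨by simp, Or.inr (by simp [GRel]; omega)⟩
        · simp only [phiX]; simp +arith; try omega
      · refine ⟨.b ⟨(m:ℕ) - 1, by omega⟩, ?_, ?_⟩
        · rw [adj_iff]
          refine ⟨by simp [GVert.b.injEq, Fin.ext_iff]; omega, Or.inr (by simp [GRel]; omega)⟩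
        · simp only [phiX]; simp +arith; try omega
    · -- c
      refine ⟨.a ⟨n1 - 1, by omega⟩, ?_, ?_⟩
      · rw [adj_iff]
        exact ⟨by simp, Or.inr (by simp [GRel])⟩
      · simp only [phiX]; simp +arith; try omega
    · -- i
      refine ⟨.a ⟨0, by omega⟩, ?_, ?_⟩
      · rw [adj_iff]
        exact ⟨by simp, Or.inr (by simp [GRel])⟩
      · simp only [phiX]; simp +arith; try omega
    · -- j t
      refine ⟨.i, ?_, ?_⟩
      · rw [adj_iff]
        exact ⟨by simp, Or.inr (by simp [GRel])⟩
      · simp [phiX]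
  · intro u v hadj
    rw [adj_iff] at hadj
    obtain ⟨hne, h | h⟩ := hadj <;>
      rcases u with k | m | _ | _ | t <;> rcases v with l | m' | _ | _ | t' <;>
        simp [GRel] at h <;> simp only [phiX] <;> try omega
    · rcases mod_cases k.isLt with ⟨hm, hl⟩ | ⟨hm, hl⟩ <;> rw [hm] at h <;> omega
    · rcases mod_cases l.isLt with ⟨hm, hl⟩ | ⟨hm, hl⟩ <;> rw [hm] at h <;> omega
noncomputable def phiJ (n1 n2 n3 : ℕ) (t : Fin n3) (u : GVert n1 n2 n3) : ℕ :=
  @ite _ (u = .j t) (Classical.propDecidable _) 0 (phiI n1 n2 n3 u + 1)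

lemma adj_to_j (t : Fin n3) : ∀ u : GVert n1 n2 n3,
    (GGraph n1 n2 n3).Adj u (.j t) → u = .i := by
  rintro (k | m | _ | _ | t') h <;> rw [adj_iff] at h <;>
    obtain ⟨hne, h | h⟩ := h <;> simp [GRel] at h <;> rfl

lemma distJ (h1 : 5 ≤ n1) (t : Fin n3) :
    ∀ u, (GGraph n1 n2 n3).dist u (.j t) = phiJ n1 n2 n3 t u := by
  apply dist_eq_phi
  · intro u
    unfold phiJ
    split
    · simp [*]
    · rename_i hne
      simp [hne]
  · intro u h
    unfold phiJ at h ⊢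
    split at h
    · exact absurd rfl h
    · rename_i hne
      by_cases hi : u = GVert.i
      · subst hi
        refine ⟨.j t, ?_, ?_⟩
        · rw [adj_iff]
          exact ⟨by simp, Or.inl (by simp [GRel])⟩
        · simp [phiI]
      · have h0 : phiI n1 n2 n3 u ≠ 0 := fun hh => hi ((phiI_zero u).mp hh)
        obtain ⟨v, hadj, hlt⟩ := phiI_up h1 u h0
        refine ⟨v, hadj, ?_⟩
        split
        · omega
        · omega
  · intro u v hadj
    unfold phiJ
    split
    · omega
    · split
      · rename_i hu hv
        subst hv
        have := adj_to_j t u hadj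
        subst this
        simp [phiI]
      · have := phiI_down h1 u v hadj
        omega

lemma edgeDist_mk {u v z : GVert n1 n2 n3} :
    edgeDist (GGraph n1 n2 n3) s(u,v) z =
      min ((GGraph n1 n2 n3).dist u z) ((GGraph n1 n2 n3).dist v z) := by
  simp [edgeDist]

lemma edgeDist_j (h1 : 5 ≤ n1) {u v : GVert n1 n2 n3} (t : Fin n3)
    (hu : u ≠ .j t) (hv : v ≠ .j t) :
    edgeDist (GGraph n1 n2 n3) s(u,v) (.j t) =
      min (phiI n1 n2 n3 u) (phiI n1 n2 n3 v) + 1 := by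
  rw [edgeDist_mk, distJ h1, distJ h1]
  unfold phiJ
  rw [if_neg hu, if_neg hv]
  omega

lemma edgeDist_j_self (h1 : 5 ≤ n1) (t : Fin n3) :
    edgeDist (GGraph n1 n2 n3) s(.i, .j t) (.j t) = 0 := by
  rw [edgeDist_mk, distJ h1, distJ h1]
  unfold phiJ
  simp

lemma edgeDist_x (h1 : 5 ≤ n1) (he : n1 % 2 = 0) {u v : GVert n1 n2 n3} :
    edgeDist (GGraph n1 n2 n3) s(u,v) (.a ⟨n1/2+1, by omega⟩) =
      min (phiX n1 n2 n3 u) (phiX n1 n2 n3 v) := by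
  rw [edgeDist_mk, distX h1 he, distX h1 he]

lemma edge_cases (h1 : 5 ≤ n1) {e : Sym2 (GVert n1 n2 n3)} (he : e ∈ (GGraph n1 n2 n3).edgeSet) :
    (∃ t : Fin n3, e = s(.i, .j t)) ∨
    (∃ k l : Fin n1, e = s(.a k, .a l) ∧
       (((k:ℕ)+1 < n1 ∧ (l:ℕ) = (k:ℕ)+1) ∨ ((k:ℕ)+1 = n1 ∧ (l:ℕ) = 0))) ∨
    (∃ (k : Fin n1) (m : Fin n2), e = s(.a k, .b m) ∧ (k:ℕ) = 1 ∧ (m:ℕ) = 0) ∨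
    (∃ m m' : Fin n2, e = s(.b m, .b m') ∧ (m':ℕ) = (m:ℕ) + 1) ∨
    (∃ k : Fin n1, e = s(.a k, .c) ∧ (k:ℕ) = n1 - 1) ∨
    (∃ k : Fin n1, e = s(.a k, .i) ∧ (k:ℕ) = 0) := by
  induction e using Sym2.ind with
  | _ u v =>
    rw [SimpleGraph.mem_edgeSet, adj_iff] at he
    obtain ⟨hne, h | h⟩ := he
    · rcases u with k|m|_|_|t <;> rcases v with l|m'|_|_|t' <;> simp [GRel] at h
      · refine Or.inr (Or.inl ⟨k, l, rfl, ?_⟩)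
        rcases mod_cases k.isLt with ⟨hm,hl⟩|⟨hm,hl⟩ <;> rw [hm] at h <;>
          [exact Or.inl ⟨hl, h⟩; exact Or.inr ⟨hl, h⟩]
      · exact Or.inr (Or.inr (Or.inl ⟨k, m', rfl, h⟩))
      · exact Or.inr (Or.inr (Or.inr (Or.inr (Or.inl ⟨k, rfl, h⟩))))
      · exact Or.inr (Or.inr (Or.inr (Or.inr (Or.inr ⟨k, rfl, h⟩))))
      · exact Or.inr (Or.inr (Or.inr (Or.inl ⟨m, m', rfl, h⟩)))
      · exact Or.inl ⟨t', rfl⟩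
    · rcases u with k|m|_|_|t <;> rcases v with l|m'|_|_|t' <;> simp [GRel] at h
      · refine Or.inr (Or.inl ⟨l, k, Sym2.eq_swap, ?_⟩)
        rcases mod_cases l.isLt with ⟨hm,hl⟩|⟨hm,hl⟩ <;> rw [hm] at h <;>
          [exact Or.inl ⟨hl, h⟩; exact Or.inr ⟨hl, h⟩]
      · exact Or.inr (Or.inr (Or.inl ⟨l, m, Sym2.eq_swap, h⟩))
      · exact Or.inr (Or.inr (Or.inr (Or.inl ⟨m', m, Sym2.eq_swap, h⟩)))
      · exact Or.inr (Or.inr (Or.inr (Or.inr (Or.inl ⟨l, Sym2.eq_swap, h⟩))))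
      · exact Or.inr (Or.inr (Or.inr (Or.inr (Or.inr ⟨l, Sym2.eq_swap, h⟩))))
      · exact Or.inl ⟨t, Sym2.eq_swap⟩


variable {n1 n2 n3 : ℕ}

lemma dJ_F1 (h1 : 5 ≤ n1) (t : Fin n3) (k l : Fin n1)
    (c1 : ((k:ℕ)+1 < n1 ∧ (l:ℕ) = (k:ℕ)+1) ∨ ((k:ℕ)+1 = n1 ∧ (l:ℕ) = 0)) :
    edgeDist (GGraph n1 n2 n3) s(.a k, .a l) (.j t) = 1 + min (k:ℕ) (n1-1-(k:ℕ)) + 1 := by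
  have hk := k.isLt; have hl := l.isLt
  rw [edgeDist_j h1 _ (by simp) (by simp)]; simp only [phiI]; omega

lemma dX_F1 (h1 : 5 ≤ n1) (he : n1 % 2 = 0) (hxlt : n1/2+1 < n1) (k l : Fin n1)
    (c1 : ((k:ℕ)+1 < n1 ∧ (l:ℕ) = (k:ℕ)+1) ∨ ((k:ℕ)+1 = n1 ∧ (l:ℕ) = 0)) :
    edgeDist (GGraph n1 n2 n3) s(.a k, .a l) (.a ⟨n1/2+1, hxlt⟩) =
      min ((n1/2-(k:ℕ))+((k:ℕ)-(n1/2+1))) (n1/2-1) := by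
  have hk := k.isLt; have hl := l.isLt
  rw [edgeDist_x h1 he]; simp only [phiX]
  obtain ⟨hc, hc2⟩ | ⟨hc, hc2⟩ := c1 <;> omega

lemma dJ_F2 (h1 : 5 ≤ n1) (t : Fin n3) (k : Fin n1) (m : Fin n2)
    (c1 : (k:ℕ) = 1 ∧ (m:ℕ) = 0) :
    edgeDist (GGraph n1 n2 n3) s(.a k, .b m) (.j t) = 3 := by
  have hk := k.isLt
  rw [edgeDist_j h1 _ (by simp) (by simp)]; simp only [phiI]; omega

lemma dX_F2 (h1 : 5 ≤ n1) (he : n1 % 2 = 0) (hxlt : n1/2+1 < n1) (k : Fin n1) (m : Fin n2)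
    (c1 : (k:ℕ) = 1 ∧ (m:ℕ) = 0) :
    edgeDist (GGraph n1 n2 n3) s(.a k, .b m) (.a ⟨n1/2+1, hxlt⟩) = n1/2 := by
  have hk := k.isLt
  rw [edgeDist_x h1 he]; simp only [phiX]; omega

lemma dJ_F3 (h1 : 5 ≤ n1) (t : Fin n3) (m q : Fin n2)
    (c1 : (q:ℕ) = (m:ℕ) + 1) :
    edgeDist (GGraph n1 n2 n3) s(.b m, .b q) (.j t) = 3 + (m:ℕ) + 1 := by
  rw [edgeDist_j h1 _ (by simp) (by simp)]; simp only [phiI]; omega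

lemma dX_F3 (h1 : 5 ≤ n1) (he : n1 % 2 = 0) (hxlt : n1/2+1 < n1) (m q : Fin n2)
    (c1 : (q:ℕ) = (m:ℕ) + 1) :
    edgeDist (GGraph n1 n2 n3) s(.b m, .b q) (.a ⟨n1/2+1, hxlt⟩) = n1/2+1+(m:ℕ) := by
  rw [edgeDist_x h1 he]; simp only [phiX]; omega

lemma dJ_F4 (h1 : 5 ≤ n1) (t : Fin n3) (k : Fin n1) (c1 : (k:ℕ) = n1 - 1) :
    edgeDist (GGraph n1 n2 n3) s(.a k, .c) (.j t) = 3 := by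
  have hk := k.isLt
  rw [edgeDist_j h1 _ (by simp) (by simp)]; simp only [phiI]; omega

lemma dX_F4 (h1 : 5 ≤ n1) (he : n1 % 2 = 0) (hxlt : n1/2+1 < n1) (k : Fin n1)
    (c1 : (k:ℕ) = n1 - 1) :
    edgeDist (GGraph n1 n2 n3) s(.a k, .c) (.a ⟨n1/2+1, hxlt⟩) = n1/2-2 := by
  have hk := k.isLt
  rw [edgeDist_x h1 he]; simp only [phiX]; omega

lemma dJ_F5 (h1 : 5 ≤ n1) (t : Fin n3) (k : Fin n1) (c1 : (k:ℕ) = 0) :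
    edgeDist (GGraph n1 n2 n3) s(.a k, .i) (.j t) = 1 := by
  have hk := k.isLt
  rw [edgeDist_j h1 _ (by simp) (by simp)]; simp only [phiI]; omega

lemma dX_F5 (h1 : 5 ≤ n1) (he : n1 % 2 = 0) (hxlt : n1/2+1 < n1) (k : Fin n1)
    (c1 : (k:ℕ) = 0) :
    edgeDist (GGraph n1 n2 n3) s(.a k, .i) (.a ⟨n1/2+1, hxlt⟩) = n1/2-1 := by
  have hk := k.isLt
  rw [edgeDist_x h1 he]; simp only [phiX]; omega

lemma gen_upper (h1 : 5 ≤ n1) (he : n1 % 2 = 0) (h2 : 1 ≤ n2) (h3 : 2 ≤ n3) :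
    IsEdgeMetricGenerator (GGraph n1 n2 n3)
      (insert (GVert.a ⟨n1/2+1, by omega⟩)
        ((GVert.j : Fin n3 → GVert n1 n2 n3) '' {t : Fin n3 | (t:ℕ) < n3-1})) := by
  have hn3 : 0 < n3 := by omega
  have hxlt : n1/2+1 < n1 := by omega
  intro e he' f hf' hne
  have hmemx : GVert.a ⟨n1/2+1, hxlt⟩ ∈
      insert (GVert.a ⟨n1/2+1, by omega⟩)
        ((GVert.j : Fin n3 → GVert n1 n2 n3) '' {t : Fin n3 | (t:ℕ) < n3-1}) :=
    Set.mem_insert_iff.mpr (Or.inl rfl)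
  have hmemj : ∀ t : Fin n3, (t:ℕ) < n3-1 → GVert.j t ∈
      insert (GVert.a ⟨n1/2+1, by omega⟩)
        ((GVert.j : Fin n3 → GVert n1 n2 n3) '' {t : Fin n3 | (t:ℕ) < n3-1}) :=
    fun t ht => Set.mem_insert_iff.mpr (Or.inr ⟨t, ht, rfl⟩)
  have hmemj0 := hmemj ⟨0, hn3⟩ (by simp; omega)
  have key : ∀ (t : Fin n3) (f : Sym2 (GVert n1 n2 n3)), f ∈ (GGraph n1 n2 n3).edgeSet →
      s(GVert.i, GVert.j t) ≠ f →
      ∃ z ∈ insert (GVert.a ⟨n1/2+1, by omega⟩)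
          ((GVert.j : Fin n3 → GVert n1 n2 n3) '' {t : Fin n3 | (t:ℕ) < n3-1}),
        edgeDist (GGraph n1 n2 n3) s(GVert.i, GVert.j t) z ≠ edgeDist (GGraph n1 n2 n3) f z := by
    intro t f hf hne
    have e_self : edgeDist (GGraph n1 n2 n3) s(GVert.i, GVert.j t) (.j t) = 0 := edgeDist_j_self h1 t
    rcases edge_cases h1 hf with ⟨t2, rfl⟩ | Ff
    · have htt : t ≠ t2 := by rintro rfl; exact hne rfl
      by_cases ht : (t:ℕ) < n3-1
      · refine ⟨.j t, hmemj t ht, ?_⟩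
        rw [e_self, edgeDist_j h1 t (by simp) (by simp [htt.symm])]
        omega
      · have ht2 : (t2:ℕ) < n3-1 := by
          have h1' := t.isLt; have h2' := t2.isLt
          have : (t:ℕ) ≠ (t2:ℕ) := fun hh => htt (Fin.ext hh)
          omega
        refine ⟨.j t2, hmemj t2 ht2, ?_⟩
        rw [edgeDist_j_self h1 t2, edgeDist_j h1 t2 (by simp) (by simp [htt])]
        omega
    · by_cases ht : (t:ℕ) < n3-1
      · refine ⟨.j t, hmemj t ht, ?_⟩
        rw [e_self]
        rcases Ff with ⟨k, l, rfl, c1⟩ | ⟨k, m, rfl, c1⟩ | ⟨m, q, rfl, c1⟩ | ⟨k, rfl, c1⟩ | ⟨k, rfl, c1⟩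
        · rw [dJ_F1 h1 t k l c1]; omega
        · rw [dJ_F2 h1 t k m c1]; omega
        · rw [dJ_F3 h1 t m q c1]; omega
        · rw [dJ_F4 h1 t k c1]; omega
        · rw [dJ_F5 h1 t k c1]; omega
      · have ht' : (t:ℕ) = n3-1 := by have := t.isLt; omega
        have htne0 : (GVert.j t : GVert n1 n2 n3) ≠ .j ⟨0, hn3⟩ := by
          simp only [ne_eq, GVert.j.injEq, Fin.ext_iff]; omega
        have e_j0 : edgeDist (GGraph n1 n2 n3) s(GVert.i, GVert.j t) (.j ⟨0, hn3⟩) = 1 := by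
          rw [edgeDist_j h1 _ (by simp) htne0]; simp [phiI]
        rcases Ff with ⟨k, l, rfl, c1⟩ | ⟨k, m, rfl, c1⟩ | ⟨m, q, rfl, c1⟩ | ⟨k, rfl, c1⟩ | ⟨k, rfl, c1⟩
        · refine ⟨_, hmemj0, ?_⟩
          rw [e_j0, dJ_F1 h1 _ k l c1]
          have hk := k.isLt; omega
        · refine ⟨_, hmemj0, ?_⟩
          rw [e_j0, dJ_F2 h1 _ k m c1]; omega
        · refine ⟨_, hmemj0, ?_⟩
          rw [e_j0, dJ_F3 h1 _ m q c1]; omega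
        · refine ⟨_, hmemj0, ?_⟩
          rw [e_j0, dJ_F4 h1 _ k c1]; omega
        · refine ⟨_, hmemx, ?_⟩
          have e_x : edgeDist (GGraph n1 n2 n3) s(GVert.i, GVert.j t) (.a ⟨n1/2+1, hxlt⟩) = n1/2 := by
            rw [edgeDist_x h1 he]; simp only [phiX]; omega
          rw [e_x, dX_F5 h1 he hxlt k c1]
          omega
  rcases edge_cases h1 he' with ⟨t, rfl⟩ | Fe
  · exact key t f hf' hne
  rcases edge_cases h1 hf' with ⟨t, rfl⟩ | Ff
  · obtain ⟨z, hz, hd⟩ := key t e he' (Ne.symm hne)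
    exact ⟨z, hz, hd.symm⟩
  rcases Fe with Fe|Fe|Fe|Fe|Fe <;> rcases Ff with Ff|Ff|Ff|Ff|Ff
  · obtain ⟨k1, l1, rfl, c1⟩ := Fe
    obtain ⟨k2, l2, rfl, c2⟩ := Ff
    have hk1 := k1.isLt; have hl1 := l1.isLt
    have hk2 := k2.isLt; have hl2 := l2.isLt
    have hv : ¬(((k1:ℕ)=(k2:ℕ) ∧ (l1:ℕ)=(l2:ℕ)) ∨ ((k1:ℕ)=(l2:ℕ) ∧ (l1:ℕ)=(k2:ℕ))) := by
      simpa [Sym2.eq_iff, Fin.ext_iff] using hne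
    by_cases hd : (1 + min (k1:ℕ) (n1-1-(k1:ℕ)) + 1) = (1 + min (k2:ℕ) (n1-1-(k2:ℕ)) + 1)
    · refine ⟨_, hmemx, ?_⟩
      rw [dX_F1 h1 he hxlt k1 l1 c1, dX_F1 h1 he hxlt k2 l2 c2]
      omega
    · refine ⟨_, hmemj0, ?_⟩
      rw [dJ_F1 h1 _ k1 l1 c1, dJ_F1 h1 _ k2 l2 c2]
      exact hd
  · obtain ⟨k1, l1, rfl, c1⟩ := Fe
    obtain ⟨k2, m2, rfl, c2⟩ := Ff
    have hk1 := k1.isLt; have hl1 := l1.isLt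
    have hk2 := k2.isLt
    by_cases hd : (1 + min (k1:ℕ) (n1-1-(k1:ℕ)) + 1) = (3)
    · refine ⟨_, hmemx, ?_⟩
      rw [dX_F1 h1 he hxlt k1 l1 c1, dX_F2 h1 he hxlt k2 m2 c2]
      omega
    · refine ⟨_, hmemj0, ?_⟩
      rw [dJ_F1 h1 _ k1 l1 c1, dJ_F2 h1 _ k2 m2 c2]
      exact hd
  · obtain ⟨k1, l1, rfl, c1⟩ := Fe
    obtain ⟨m2, q2, rfl, c2⟩ := Ff
    have hk1 := k1.isLt; have hl1 := l1.isLt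
    have hm2 := m2.isLt; have hq2 := q2.isLt
    by_cases hd : (1 + min (k1:ℕ) (n1-1-(k1:ℕ)) + 1) = (3 + (m2:ℕ) + 1)
    · refine ⟨_, hmemx, ?_⟩
      rw [dX_F1 h1 he hxlt k1 l1 c1, dX_F3 h1 he hxlt m2 q2 c2]
      omega
    · refine ⟨_, hmemj0, ?_⟩
      rw [dJ_F1 h1 _ k1 l1 c1, dJ_F3 h1 _ m2 q2 c2]
      exact hd
  · obtain ⟨k1, l1, rfl, c1⟩ := Fe
    obtain ⟨k2, rfl, c2⟩ := Ff
    have hk1 := k1.isLt; have hl1 := l1.isLt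
    have hk2 := k2.isLt
    by_cases hd : (1 + min (k1:ℕ) (n1-1-(k1:ℕ)) + 1) = (3)
    · refine ⟨_, hmemx, ?_⟩
      rw [dX_F1 h1 he hxlt k1 l1 c1, dX_F4 h1 he hxlt k2 c2]
      omega
    · refine ⟨_, hmemj0, ?_⟩
      rw [dJ_F1 h1 _ k1 l1 c1, dJ_F4 h1 _ k2 c2]
      exact hd
  · obtain ⟨k1, l1, rfl, c1⟩ := Fe
    obtain ⟨k2, rfl, c2⟩ := Ff
    have hk1 := k1.isLt; have hl1 := l1.isLt
    have hk2 := k2.isLt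
    by_cases hd : (1 + min (k1:ℕ) (n1-1-(k1:ℕ)) + 1) = (1)
    · refine ⟨_, hmemx, ?_⟩
      rw [dX_F1 h1 he hxlt k1 l1 c1, dX_F5 h1 he hxlt k2 c2]
      omega
    · refine ⟨_, hmemj0, ?_⟩
      rw [dJ_F1 h1 _ k1 l1 c1, dJ_F5 h1 _ k2 c2]
      exact hd
  · obtain ⟨k1, m1, rfl, c1⟩ := Fe
    obtain ⟨k2, l2, rfl, c2⟩ := Ff
    have hk1 := k1.isLt
    have hk2 := k2.isLt; have hl2 := l2.isLt
    by_cases hd : (3) = (1 + min (k2:ℕ) (n1-1-(k2:ℕ)) + 1)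
    · refine ⟨_, hmemx, ?_⟩
      rw [dX_F2 h1 he hxlt k1 m1 c1, dX_F1 h1 he hxlt k2 l2 c2]
      omega
    · refine ⟨_, hmemj0, ?_⟩
      rw [dJ_F2 h1 _ k1 m1 c1, dJ_F1 h1 _ k2 l2 c2]
      exact hd
  · obtain ⟨k1, m1, rfl, c1⟩ := Fe
    obtain ⟨k2, m2, rfl, c2⟩ := Ff
    have hk1 := k1.isLt
    have hk2 := k2.isLt
    exfalso; apply hne
    have e1 : k1 = k2 := Fin.ext (by omega)
    have e2 : m1 = m2 := Fin.ext (by omega)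
    rw [e1, e2]
  · obtain ⟨k1, m1, rfl, c1⟩ := Fe
    obtain ⟨m2, q2, rfl, c2⟩ := Ff
    have hk1 := k1.isLt
    have hm2 := m2.isLt; have hq2 := q2.isLt
    by_cases hd : (3) = (3 + (m2:ℕ) + 1)
    · refine ⟨_, hmemx, ?_⟩
      rw [dX_F2 h1 he hxlt k1 m1 c1, dX_F3 h1 he hxlt m2 q2 c2]
      omega
    · refine ⟨_, hmemj0, ?_⟩
      rw [dJ_F2 h1 _ k1 m1 c1, dJ_F3 h1 _ m2 q2 c2]
      exact hd
  · obtain ⟨k1, m1, rfl, c1⟩ := Fe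
    obtain ⟨k2, rfl, c2⟩ := Ff
    have hk1 := k1.isLt
    have hk2 := k2.isLt
    by_cases hd : (3) = (3)
    · refine ⟨_, hmemx, ?_⟩
      rw [dX_F2 h1 he hxlt k1 m1 c1, dX_F4 h1 he hxlt k2 c2]
      omega
    · refine ⟨_, hmemj0, ?_⟩
      rw [dJ_F2 h1 _ k1 m1 c1, dJ_F4 h1 _ k2 c2]
      exact hd
  · obtain ⟨k1, m1, rfl, c1⟩ := Fe
    obtain ⟨k2, rfl, c2⟩ := Ff
    have hk1 := k1.isLt
    have hk2 := k2.isLt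
    by_cases hd : (3) = (1)
    · refine ⟨_, hmemx, ?_⟩
      rw [dX_F2 h1 he hxlt k1 m1 c1, dX_F5 h1 he hxlt k2 c2]
      omega
    · refine ⟨_, hmemj0, ?_⟩
      rw [dJ_F2 h1 _ k1 m1 c1, dJ_F5 h1 _ k2 c2]
      exact hd
  · obtain ⟨m1, q1, rfl, c1⟩ := Fe
    obtain ⟨k2, l2, rfl, c2⟩ := Ff
    have hm1 := m1.isLt; have hq1 := q1.isLt
    have hk2 := k2.isLt; have hl2 := l2.isLt
    by_cases hd : (3 + (m1:ℕ) + 1) = (1 + min (k2:ℕ) (n1-1-(k2:ℕ)) + 1)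
    · refine ⟨_, hmemx, ?_⟩
      rw [dX_F3 h1 he hxlt m1 q1 c1, dX_F1 h1 he hxlt k2 l2 c2]
      omega
    · refine ⟨_, hmemj0, ?_⟩
      rw [dJ_F3 h1 _ m1 q1 c1, dJ_F1 h1 _ k2 l2 c2]
      exact hd
  · obtain ⟨m1, q1, rfl, c1⟩ := Fe
    obtain ⟨k2, m2, rfl, c2⟩ := Ff
    have hm1 := m1.isLt; have hq1 := q1.isLt
    have hk2 := k2.isLt
    by_cases hd : (3 + (m1:ℕ) + 1) = (3)
    · refine ⟨_, hmemx, ?_⟩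
      rw [dX_F3 h1 he hxlt m1 q1 c1, dX_F2 h1 he hxlt k2 m2 c2]
      omega
    · refine ⟨_, hmemj0, ?_⟩
      rw [dJ_F3 h1 _ m1 q1 c1, dJ_F2 h1 _ k2 m2 c2]
      exact hd
  · obtain ⟨m1, q1, rfl, c1⟩ := Fe
    obtain ⟨m2, q2, rfl, c2⟩ := Ff
    have hm1 := m1.isLt; have hq1 := q1.isLt
    have hm2 := m2.isLt; have hq2 := q2.isLt
    have hv : ¬(((m1:ℕ)=(m2:ℕ) ∧ (q1:ℕ)=(q2:ℕ)) ∨ ((m1:ℕ)=(q2:ℕ) ∧ (q1:ℕ)=(m2:ℕ))) := by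
      simpa [Sym2.eq_iff, Fin.ext_iff] using hne
    by_cases hd : (3 + (m1:ℕ) + 1) = (3 + (m2:ℕ) + 1)
    · refine ⟨_, hmemx, ?_⟩
      rw [dX_F3 h1 he hxlt m1 q1 c1, dX_F3 h1 he hxlt m2 q2 c2]
      omega
    · refine ⟨_, hmemj0, ?_⟩
      rw [dJ_F3 h1 _ m1 q1 c1, dJ_F3 h1 _ m2 q2 c2]
      exact hd
  · obtain ⟨m1, q1, rfl, c1⟩ := Fe
    obtain ⟨k2, rfl, c2⟩ := Ff
    have hm1 := m1.isLt; have hq1 := q1.isLt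
    have hk2 := k2.isLt
    by_cases hd : (3 + (m1:ℕ) + 1) = (3)
    · refine ⟨_, hmemx, ?_⟩
      rw [dX_F3 h1 he hxlt m1 q1 c1, dX_F4 h1 he hxlt k2 c2]
      omega
    · refine ⟨_, hmemj0, ?_⟩
      rw [dJ_F3 h1 _ m1 q1 c1, dJ_F4 h1 _ k2 c2]
      exact hd
  · obtain ⟨m1, q1, rfl, c1⟩ := Fe
    obtain ⟨k2, rfl, c2⟩ := Ff
    have hm1 := m1.isLt; have hq1 := q1.isLt
    have hk2 := k2.isLt
    by_cases hd : (3 + (m1:ℕ) + 1) = (1)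
    · refine ⟨_, hmemx, ?_⟩
      rw [dX_F3 h1 he hxlt m1 q1 c1, dX_F5 h1 he hxlt k2 c2]
      omega
    · refine ⟨_, hmemj0, ?_⟩
      rw [dJ_F3 h1 _ m1 q1 c1, dJ_F5 h1 _ k2 c2]
      exact hd
  · obtain ⟨k1, rfl, c1⟩ := Fe
    obtain ⟨k2, l2, rfl, c2⟩ := Ff
    have hk1 := k1.isLt
    have hk2 := k2.isLt; have hl2 := l2.isLt
    by_cases hd : (3) = (1 + min (k2:ℕ) (n1-1-(k2:ℕ)) + 1)
    · refine ⟨_, hmemx, ?_⟩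
      rw [dX_F4 h1 he hxlt k1 c1, dX_F1 h1 he hxlt k2 l2 c2]
      omega
    · refine ⟨_, hmemj0, ?_⟩
      rw [dJ_F4 h1 _ k1 c1, dJ_F1 h1 _ k2 l2 c2]
      exact hd
  · obtain ⟨k1, rfl, c1⟩ := Fe
    obtain ⟨k2, m2, rfl, c2⟩ := Ff
    have hk1 := k1.isLt
    have hk2 := k2.isLt
    by_cases hd : (3) = (3)
    · refine ⟨_, hmemx, ?_⟩
      rw [dX_F4 h1 he hxlt k1 c1, dX_F2 h1 he hxlt k2 m2 c2]
      omega
    · refine ⟨_, hmemj0, ?_⟩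
      rw [dJ_F4 h1 _ k1 c1, dJ_F2 h1 _ k2 m2 c2]
      exact hd
  · obtain ⟨k1, rfl, c1⟩ := Fe
    obtain ⟨m2, q2, rfl, c2⟩ := Ff
    have hk1 := k1.isLt
    have hm2 := m2.isLt; have hq2 := q2.isLt
    by_cases hd : (3) = (3 + (m2:ℕ) + 1)
    · refine ⟨_, hmemx, ?_⟩
      rw [dX_F4 h1 he hxlt k1 c1, dX_F3 h1 he hxlt m2 q2 c2]
      omega
    · refine ⟨_, hmemj0, ?_⟩
      rw [dJ_F4 h1 _ k1 c1, dJ_F3 h1 _ m2 q2 c2]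
      exact hd
  · obtain ⟨k1, rfl, c1⟩ := Fe
    obtain ⟨k2, rfl, c2⟩ := Ff
    have hk1 := k1.isLt
    have hk2 := k2.isLt
    exfalso; apply hne
    have e1 : k1 = k2 := Fin.ext (by omega)
    rw [e1]
  · obtain ⟨k1, rfl, c1⟩ := Fe
    obtain ⟨k2, rfl, c2⟩ := Ff
    have hk1 := k1.isLt
    have hk2 := k2.isLt
    by_cases hd : (3) = (1)
    · refine ⟨_, hmemx, ?_⟩
      rw [dX_F4 h1 he hxlt k1 c1, dX_F5 h1 he hxlt k2 c2]
      omega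
    · refine ⟨_, hmemj0, ?_⟩
      rw [dJ_F4 h1 _ k1 c1, dJ_F5 h1 _ k2 c2]
      exact hd
  · obtain ⟨k1, rfl, c1⟩ := Fe
    obtain ⟨k2, l2, rfl, c2⟩ := Ff
    have hk1 := k1.isLt
    have hk2 := k2.isLt; have hl2 := l2.isLt
    by_cases hd : (1) = (1 + min (k2:ℕ) (n1-1-(k2:ℕ)) + 1)
    · refine ⟨_, hmemx, ?_⟩
      rw [dX_F5 h1 he hxlt k1 c1, dX_F1 h1 he hxlt k2 l2 c2]
      omega
    · refine ⟨_, hmemj0, ?_⟩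
      rw [dJ_F5 h1 _ k1 c1, dJ_F1 h1 _ k2 l2 c2]
      exact hd
  · obtain ⟨k1, rfl, c1⟩ := Fe
    obtain ⟨k2, m2, rfl, c2⟩ := Ff
    have hk1 := k1.isLt
    have hk2 := k2.isLt
    by_cases hd : (1) = (3)
    · refine ⟨_, hmemx, ?_⟩
      rw [dX_F5 h1 he hxlt k1 c1, dX_F2 h1 he hxlt k2 m2 c2]
      omega
    · refine ⟨_, hmemj0, ?_⟩
      rw [dJ_F5 h1 _ k1 c1, dJ_F2 h1 _ k2 m2 c2]
      exact hd
  · obtain ⟨k1, rfl, c1⟩ := Fe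
    obtain ⟨m2, q2, rfl, c2⟩ := Ff
    have hk1 := k1.isLt
    have hm2 := m2.isLt; have hq2 := q2.isLt
    by_cases hd : (1) = (3 + (m2:ℕ) + 1)
    · refine ⟨_, hmemx, ?_⟩
      rw [dX_F5 h1 he hxlt k1 c1, dX_F3 h1 he hxlt m2 q2 c2]
      omega
    · refine ⟨_, hmemj0, ?_⟩
      rw [dJ_F5 h1 _ k1 c1, dJ_F3 h1 _ m2 q2 c2]
      exact hd
  · obtain ⟨k1, rfl, c1⟩ := Fe
    obtain ⟨k2, rfl, c2⟩ := Ff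
    have hk1 := k1.isLt
    have hk2 := k2.isLt
    by_cases hd : (1) = (3)
    · refine ⟨_, hmemx, ?_⟩
      rw [dX_F5 h1 he hxlt k1 c1, dX_F4 h1 he hxlt k2 c2]
      omega
    · refine ⟨_, hmemj0, ?_⟩
      rw [dJ_F5 h1 _ k1 c1, dJ_F4 h1 _ k2 c2]
      exact hd
  · obtain ⟨k1, rfl, c1⟩ := Fe
    obtain ⟨k2, rfl, c2⟩ := Ff
    have hk1 := k1.isLt
    have hk2 := k2.isLt
    exfalso; apply hne
    have e1 : k1 = k2 := Fin.ext (by omega)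
    rw [e1]


lemma pendant_mem (t : Fin n3) : s(GVert.i, GVert.j t) ∈ (GGraph n1 n2 n3).edgeSet := by
  rw [SimpleGraph.mem_edgeSet, adj_iff]
  exact ⟨by simp, Or.inl (by simp [GRel])⟩

lemma edgeDist_pendant_generic (h1 : 5 ≤ n1) (t : Fin n3) (z : GVert n1 n2 n3) (hz : z ≠ .j t) :
    edgeDist (GGraph n1 n2 n3) s(GVert.i, GVert.j t) z = phiI n1 n2 n3 z := by
  rw [edgeDist_mk]
  rw [show (GGraph n1 n2 n3).dist GVert.i z = (GGraph n1 n2 n3).dist z GVert.i from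
    SimpleGraph.dist_comm]
  rw [show (GGraph n1 n2 n3).dist (GVert.j t) z = (GGraph n1 n2 n3).dist z (GVert.j t) from
    SimpleGraph.dist_comm]
  rw [distI h1 z, distJ h1 t z]
  unfold phiJ
  rw [if_neg hz]
  omega

lemma lower (h1 : 5 ≤ n1) (h3 : 2 ≤ n3) (S : Set (GVert n1 n2 n3)) (hfin : S.Finite)
    (hgen : IsEdgeMetricGenerator (GGraph n1 n2 n3) S) : n3 ≤ S.ncard := by
  have step1 : ∀ s t : Fin n3, s ≠ t → (GVert.j s ∈ S ∨ GVert.j t ∈ S) := by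
    intro s t hst
    by_contra hc
    push_neg at hc
    obtain ⟨hs, ht⟩ := hc
    have hne : s(GVert.i, GVert.j s) ≠ (s(GVert.i, GVert.j t) : Sym2 (GVert n1 n2 n3)) := by
      simp [Sym2.eq_iff, hst]
    obtain ⟨z, hzS, hzd⟩ := hgen _ (pendant_mem s) _ (pendant_mem t) hne
    apply hzd
    rw [edgeDist_pendant_generic h1 s z (by rintro rfl; exact hs hzS),
        edgeDist_pendant_generic h1 t z (by rintro rfl; exact ht hzS)]
  classical
  set M : Set (Fin n3) := {t | GVert.j t ∈ S} with hM
  have hinj : Function.Injective (GVert.j : Fin n3 → GVert n1 n2 n3) := by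
    intro a b h
    simpa using h
  have himg : (GVert.j '' M : Set (GVert n1 n2 n3)) ⊆ S := by
    rintro _ ⟨t, ht, rfl⟩; exact ht
  have hMc : (Mᶜ : Set (Fin n3)).ncard ≤ 1 := by
    rw [Set.ncard_le_one_iff (Set.toFinite _)]
    intro a b ha hb
    by_contra hab
    rcases step1 a b hab with h | h
    · exact ha h
    · exact hb h
  have h4 : M.ncard + (Mᶜ : Set (Fin n3)).ncard = n3 := by
    rw [Set.ncard_add_ncard_compl]
    simp
  have h5 : ((GVert.j '' M : Set (GVert n1 n2 n3))).ncard = M.ncard :=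
    Set.ncard_image_of_injective _ hinj
  have h6 : ((GVert.j '' M : Set (GVert n1 n2 n3))).ncard ≤ S.ncard :=
    Set.ncard_le_ncard himg hfin
  by_contra hlt
  push_neg at hlt
  have hSeq : (GVert.j '' M : Set (GVert n1 n2 n3)) = S :=
    Set.eq_of_subset_of_ncard_le himg (by omega) hfin
  have he0 : s(GVert.a ⟨0, by omega⟩, GVert.a ⟨1, by omega⟩) ∈ (GGraph n1 n2 n3).edgeSet := by
    rw [SimpleGraph.mem_edgeSet, adj_iff]
    refine ⟨by simp [GVert.a.injEq, Fin.ext_iff], Or.inl ?_⟩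
    simp [GRel]
    rw [Nat.mod_eq_of_lt (by omega)]
  have he1 : s(GVert.a ⟨n1-1, by omega⟩, GVert.a ⟨0, by omega⟩) ∈ (GGraph n1 n2 n3).edgeSet := by
    rw [SimpleGraph.mem_edgeSet, adj_iff]
    refine ⟨by simp [GVert.a.injEq, Fin.ext_iff]; omega, Or.inl ?_⟩
    simp [GRel]
    rw [show n1 - 1 + 1 = n1 by omega, Nat.mod_self]
  have hne01 : s(GVert.a ⟨0, by omega⟩, GVert.a ⟨1, by omega⟩) ≠
      (s(GVert.a ⟨n1-1, by omega⟩, GVert.a ⟨0, by omega⟩) : Sym2 (GVert n1 n2 n3)) := by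
    simp [Sym2.eq_iff, GVert.a.injEq, Fin.ext_iff]
    omega
  obtain ⟨z, hzS, hzd⟩ := hgen _ he0 _ he1 hne01
  rw [← hSeq] at hzS
  obtain ⟨t, ht, rfl⟩ := hzS
  apply hzd
  rw [edgeDist_j h1 t (by simp) (by simp), edgeDist_j h1 t (by simp) (by simp)]
  simp only [phiI]
  simp +arith
  try omega

lemma Scard (h1 : 5 ≤ n1) (h3 : 2 ≤ n3) :
    (insert (GVert.a ⟨n1/2+1, by omega⟩)
      ((GVert.j : Fin n3 → GVert n1 n2 n3) '' {t : Fin n3 | (t:ℕ) < n3-1})).ncard = n3 := by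
  have hinj : Function.Injective (GVert.j : Fin n3 → GVert n1 n2 n3) := by
    intro a b h
    simpa using h
  have hnotmem : (GVert.a ⟨n1/2+1, by omega⟩ : GVert n1 n2 n3) ∉
      ((GVert.j : Fin n3 → GVert n1 n2 n3) '' {t : Fin n3 | (t:ℕ) < n3-1}) := by
    rintro ⟨t, ht, h⟩
    exact absurd h (by simp)
  rw [Set.ncard_insert_of_notMem hnotmem ((Set.toFinite _).image _)]
  rw [Set.ncard_image_of_injective _ hinj]
  have hre : {t : Fin n3 | (t:ℕ) < n3-1} =
      Set.range (Fin.castLE (show n3-1 ≤ n3 by omega)) := by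
    ext t
    constructor
    · intro ht
      exact ⟨⟨(t:ℕ), ht⟩, by simp [Fin.castLE, Fin.ext_iff]⟩
    · rintro ⟨s, rfl⟩
      simpa using s.isLt
  rw [hre, ← Set.image_univ, Set.ncard_image_of_injective _ (Fin.castLE_injective _),
    Set.ncard_univ]
  simp
  omega

end EMD


/-- Lemma 4 (even case): if `n1` is even then `edim(G_{n1,n2,n3}) = n3`. -/
theorem edgeMetricDim_GGraph_even (n1 n2 n3 : ℕ) (h1 : 5 ≤ n1) (heven : Even n1)
    (h2 : 1 ≤ n2) (h3 : 2 ≤ n3) :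
    edgeMetricDim (GGraph n1 n2 n3) = n3 := by
  have he' : n1 % 2 = 0 := Nat.even_iff.mp heven
  have hmem : n3 ∈ {n | ∃ S : Set (GVert n1 n2 n3), S.Finite ∧
      IsEdgeMetricGenerator (GGraph n1 n2 n3) S ∧ S.ncard = n} :=
    ⟨_, ((Set.toFinite _).image _).insert _, EMD.gen_upper h1 he' h2 h3, EMD.Scard h1 h3⟩
  unfold edgeMetricDim
  apply le_antisymm
  · exact Nat.sInf_le hmem
  · apply le_csInf ⟨n3, hmem⟩
    rintro m ⟨S, hfin, hgen, rfl⟩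
    exact EMD.lower h1 h3 S hfin hgen
end

section
/- Let G_1 and G_2 be connected graphs, neither of which is a path. Suppose G_1 has a metric basis S_1 and an edge metric basis T_1 with a vertex v_1 ∈ S_1 ∩ T_1, and G_2 has a metric basis S_2 and an edge metric basis T_2 with vertices v_2, u_2 ∈ S_2 ∩ T_2 such that d_{G_2}(u_2, v_2) ≥ d_{G_2}(u_2, z) for every z ∈ V(G_2). Let G be the graph obtained from the disjoint union of G_1 and G_2 by adding the edge v_1 v_2. Then dim(G) = dim(G_1) + dim(G_2) − 2, and moreover S = (S_1 ∪ S_2) \ {v_1, v_2} is a metric basis of G. -/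
/-- `S` is a metric basis of `G`: a metric generator of minimum cardinality. -/
def IsMetricBasis {V : Type*} (G : SimpleGraph V) (S : Set V) : Prop :=
  S.Finite ∧ IsMetricGenerator G S ∧ S.ncard = metricDim G

/-- `T` is an edge metric basis of `G`: an edge metric generator of minimum
cardinality. -/
def IsEdgeMetricBasis {V : Type*} (G : SimpleGraph V) (T : Set V) : Prop :=
  T.Finite ∧ IsEdgeMetricGenerator G T ∧ T.ncard = edgeMetricDim G

/-- `G` is (isomorphic to) a path graph. -/
def IsPathGraph {V : Type*} (G : SimpleGraph V) : Prop :=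
  ∃ n : ℕ, Nonempty (G ≃g SimpleGraph.pathGraph n)

/-- The graph obtained from the disjoint union of `G1` and `G2` by adding the
edge `v1 v2`. -/
def glueGraph {V1 V2 : Type*} (G1 : SimpleGraph V1) (G2 : SimpleGraph V2)
    (v1 : V1) (v2 : V2) : SimpleGraph (V1 ⊕ V2) :=
  SimpleGraph.fromRel fun x y =>
    match x, y with
    | .inl a, .inl b => G1.Adj a b
    | .inr a, .inr b => G2.Adj a b
    | .inl a, .inr b => a = v1 ∧ b = v2
    | _, _ => False

namespace GlueAux
open SimpleGraph Sum

variable {V1 V2 : Type*} {G1 : SimpleGraph V1} {G2 : SimpleGraph V2} {v1 : V1} {v2 : V2}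

lemma adj_ll {a b : V1} : (glueGraph G1 G2 v1 v2).Adj (inl a) (inl b) ↔ G1.Adj a b := by
  simp only [glueGraph, SimpleGraph.fromRel_adj]
  constructor
  · rintro ⟨hne, h | h⟩
    · exact h
    · exact h.symm
  · intro h; exact ⟨by simpa using h.ne, Or.inl h⟩

lemma adj_rr {a b : V2} : (glueGraph G1 G2 v1 v2).Adj (inr a) (inr b) ↔ G2.Adj a b := by
  simp only [glueGraph, SimpleGraph.fromRel_adj]
  constructor
  · rintro ⟨hne, h | h⟩
    · exact h
    · exact h.symm
  · intro h; exact ⟨by simpa using h.ne, Or.inl h⟩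

lemma adj_lr {a : V1} {b : V2} :
    (glueGraph G1 G2 v1 v2).Adj (inl a) (inr b) ↔ a = v1 ∧ b = v2 := by
  simp only [glueGraph, SimpleGraph.fromRel_adj]
  constructor
  · rintro ⟨hne, h | h⟩
    · exact h
    · exact h.elim
  · rintro ⟨rfl, rfl⟩; exact ⟨by simp, Or.inl ⟨rfl, rfl⟩⟩

lemma adj_rl {a : V1} {b : V2} :
    (glueGraph G1 G2 v1 v2).Adj (inr b) (inl a) ↔ a = v1 ∧ b = v2 := by
  rw [adj_comm]; exact adj_lr

def inlHom (G1 : SimpleGraph V1) (G2 : SimpleGraph V2) (v1 : V1) (v2 : V2) :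
    G1 →g glueGraph G1 G2 v1 v2 := ⟨inl, fun h => adj_ll.mpr h⟩

def inrHom (G1 : SimpleGraph V1) (G2 : SimpleGraph V2) (v1 : V1) (v2 : V2) :
    G2 →g glueGraph G1 G2 v1 v2 := ⟨inr, fun h => adj_rr.mpr h⟩

@[simp] lemma inlHom_apply (a : V1) : inlHom G1 G2 v1 v2 a = inl a := rfl

@[simp] lemma inrHom_apply (a : V2) : inrHom G1 G2 v1 v2 a = inr a := rfl

-- walk projections, appended inside namespace
lemma exit_r :
    ∀ {x y : V1 ⊕ V2} (p : (glueGraph G1 G2 v1 v2).Walk x y) (c : V2) (b : V1),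
      x = inr c → y = inl b →
    ∃ q : (glueGraph G1 G2 v1 v2).Walk (inl v1) (inl b), q.length < p.length := by
  intro x y p
  induction p with
  | nil => intro c b h1 h2; subst h1; simp at h2
  | @cons u v w h p ih =>
    rintro c b rfl rfl
    cases v with
    | inl w1 =>
      obtain ⟨h1, h2⟩ := adj_rl.mp h
      subst h1
      exact ⟨p, by simp⟩
    | inr w2 =>
      obtain ⟨q, hq⟩ := ih w2 _ rfl rfl
      exact ⟨q, by simp; omega⟩

lemma exit_l :
    ∀ {x y : V1 ⊕ V2} (p : (glueGraph G1 G2 v1 v2).Walk x y) (c : V1) (b : V2),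
      x = inl c → y = inr b →
    ∃ q : (glueGraph G1 G2 v1 v2).Walk (inr v2) (inr b), q.length < p.length := by
  intro x y p
  induction p with
  | nil => intro c b h1 h2; subst h1; simp at h2
  | @cons u v w h p ih =>
    rintro c b rfl rfl
    cases v with
    | inr w2 =>
      obtain ⟨h1, h2⟩ := adj_lr.mp h
      subst h2
      exact ⟨p, by simp⟩
    | inl w1 =>
      obtain ⟨q, hq⟩ := ih w1 _ rfl rfl
      exact ⟨q, by simp; omega⟩

lemma proj_l (n : ℕ) : ∀ (a b : V1) (p : (glueGraph G1 G2 v1 v2).Walk (inl a) (inl b)),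
    p.length ≤ n → ∃ q : G1.Walk a b, q.length ≤ p.length := by
  induction n with
  | zero =>
    intro a b p hp
    cases p with
    | nil => exact ⟨Walk.nil, by simp⟩
    | cons h p => simp at hp
  | succ n ih =>
    intro a b p hp
    cases p with
    | nil => exact ⟨Walk.nil, by simp⟩
    | @cons _ v _ h p' =>
      cases v with
      | inl c =>
        obtain ⟨q, hq⟩ := ih c b p' (by simp at hp; omega)
        exact ⟨Walk.cons (adj_ll.mp h) q, by simp; omega⟩
      | inr c =>
        obtain ⟨h1, h2⟩ := adj_lr.mp h
        subst a; subst c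
        obtain ⟨r, hr⟩ := exit_r p' v2 b rfl rfl
        obtain ⟨q, hq⟩ := ih v1 b r (by simp at hp ⊢; omega)
        exact ⟨q, by simp; omega⟩

lemma proj_r (n : ℕ) : ∀ (a b : V2) (p : (glueGraph G1 G2 v1 v2).Walk (inr a) (inr b)),
    p.length ≤ n → ∃ q : G2.Walk a b, q.length ≤ p.length := by
  induction n with
  | zero =>
    intro a b p hp
    cases p with
    | nil => exact ⟨Walk.nil, by simp⟩
    | cons h p => simp at hp
  | succ n ih =>
    intro a b p hp
    cases p with
    | nil => exact ⟨Walk.nil, by simp⟩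
    | @cons _ v _ h p' =>
      cases v with
      | inr c =>
        obtain ⟨q, hq⟩ := ih c b p' (by simp at hp; omega)
        exact ⟨Walk.cons (adj_rr.mp h) q, by simp; omega⟩
      | inl c =>
        obtain ⟨h1, h2⟩ := adj_rl.mp h
        subst a; subst c
        obtain ⟨r, hr⟩ := exit_l p' v1 b rfl rfl
        obtain ⟨q, hq⟩ := ih v2 b r (by simp at hp ⊢; omega)
        exact ⟨q, by simp; omega⟩

lemma proj_cross (n : ℕ) : ∀ (a : V1) (b : V2)
    (p : (glueGraph G1 G2 v1 v2).Walk (inl a) (inr b)), p.length ≤ n →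
    ∃ (q1 : G1.Walk a v1) (q2 : G2.Walk v2 b), q1.length + 1 + q2.length ≤ p.length := by
  induction n with
  | zero =>
    intro a b p hp
    cases p with
    | cons h p => simp at hp
  | succ n ih =>
    intro a b p hp
    cases p with
    | @cons _ v _ h p' =>
      cases v with
      | inr c =>
        obtain ⟨h1, h2⟩ := adj_lr.mp h
        subst a; subst c
        obtain ⟨q2, hq2⟩ := proj_r p'.length v2 b p' le_rfl
        exact ⟨Walk.nil, q2, by simp; omega⟩
      | inl c =>
        obtain ⟨q1, q2, hq⟩ := ih c b p' (by simp at hp; omega)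
        exact ⟨Walk.cons (adj_ll.mp h) q1, q2, by simp; omega⟩

lemma glue_connected (hc1 : G1.Connected) (hc2 : G2.Connected) :
    (glueGraph G1 G2 v1 v2).Connected := by
  rw [SimpleGraph.connected_iff]
  refine ⟨?_, ⟨inl v1⟩⟩
  have hbr : (glueGraph G1 G2 v1 v2).Reachable (inl v1) (inr v2) :=
    (adj_lr.mpr ⟨rfl, rfl⟩).reachable
  have h1 : ∀ a : V1, (glueGraph G1 G2 v1 v2).Reachable (inl a) (inl v1) :=
    fun a => (hc1.preconnected a v1).map (inlHom G1 G2 v1 v2)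
  have h2 : ∀ a : V2, (glueGraph G1 G2 v1 v2).Reachable (inr a) (inr v2) :=
    fun a => (hc2.preconnected a v2).map (inrHom G1 G2 v1 v2)
  intro x y
  cases x with
  | inl a =>
    cases y with
    | inl b => exact ((hc1.preconnected a b).map (inlHom G1 G2 v1 v2))
    | inr b => exact ((h1 a).trans hbr).trans (h2 b).symm
  | inr a =>
    cases y with
    | inl b => exact (((h1 b).trans hbr).trans (h2 a).symm).symm
    | inr b => exact ((hc2.preconnected a b).map (inrHom G1 G2 v1 v2))

lemma dist_ll (hc1 : G1.Connected) (a b : V1) :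
    (glueGraph G1 G2 v1 v2).dist (inl a) (inl b) = G1.dist a b := by
  apply le_antisymm
  · obtain ⟨w, hw⟩ := hc1.exists_walk_length_eq_dist a b
    calc (glueGraph G1 G2 v1 v2).dist (inl a) (inl b)
        ≤ (w.map (inlHom G1 G2 v1 v2)).length := SimpleGraph.dist_le _
      _ = G1.dist a b := by rw [Walk.length_map, hw]
  · have hr : (glueGraph G1 G2 v1 v2).Reachable (inl a) (inl b) :=
      (hc1.preconnected a b).map (inlHom G1 G2 v1 v2)
    obtain ⟨p, hp⟩ := hr.exists_walk_length_eq_dist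
    obtain ⟨q, hq⟩ := proj_l p.length a b p le_rfl
    calc G1.dist a b ≤ q.length := SimpleGraph.dist_le q
      _ ≤ p.length := hq
      _ = _ := hp

lemma dist_rr (hc2 : G2.Connected) (a b : V2) :
    (glueGraph G1 G2 v1 v2).dist (inr a) (inr b) = G2.dist a b := by
  apply le_antisymm
  · obtain ⟨w, hw⟩ := hc2.exists_walk_length_eq_dist a b
    calc (glueGraph G1 G2 v1 v2).dist (inr a) (inr b)
        ≤ (w.map (inrHom G1 G2 v1 v2)).length := SimpleGraph.dist_le _
      _ = G2.dist a b := by rw [Walk.length_map, hw]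
  · have hr : (glueGraph G1 G2 v1 v2).Reachable (inr a) (inr b) :=
      (hc2.preconnected a b).map (inrHom G1 G2 v1 v2)
    obtain ⟨p, hp⟩ := hr.exists_walk_length_eq_dist
    obtain ⟨q, hq⟩ := proj_r p.length a b p le_rfl
    calc G2.dist a b ≤ q.length := SimpleGraph.dist_le q
      _ ≤ p.length := hq
      _ = _ := hp

lemma dist_lr (hc1 : G1.Connected) (hc2 : G2.Connected) (a : V1) (b : V2) :
    (glueGraph G1 G2 v1 v2).dist (inl a) (inr b)
      = G1.dist a v1 + 1 + G2.dist v2 b := by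
  apply le_antisymm
  · obtain ⟨w1, hw1⟩ := hc1.exists_walk_length_eq_dist a v1
    obtain ⟨w2, hw2⟩ := hc2.exists_walk_length_eq_dist v2 b
    have := SimpleGraph.dist_le ((w1.map (inlHom G1 G2 v1 v2)).append
      (Walk.cons (adj_lr.mpr ⟨rfl, rfl⟩) (w2.map (inrHom G1 G2 v1 v2))))
    simp only [Walk.length_append, Walk.length_cons, Walk.length_map, inlHom_apply,
      inrHom_apply, hw1, hw2] at this
    erw [Walk.length_append, Walk.length_cons, Walk.length_map, Walk.length_map, hw1, hw2] at this
    omega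
  · have hbr : (glueGraph G1 G2 v1 v2).Reachable (inl v1) (inr v2) :=
      (adj_lr.mpr ⟨rfl, rfl⟩).reachable
    have hr : (glueGraph G1 G2 v1 v2).Reachable (inl a) (inr b) :=
      (((hc1.preconnected a v1).map (inlHom G1 G2 v1 v2)).trans hbr).trans
        ((hc2.preconnected v2 b).map (inrHom G1 G2 v1 v2))
    obtain ⟨p, hp⟩ := hr.exists_walk_length_eq_dist
    obtain ⟨q1, q2, hq⟩ := proj_cross p.length a b p le_rfl
    have h1 := SimpleGraph.dist_le q1
    have h2 := SimpleGraph.dist_le q2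
    omega

end GlueAux

section PathLemma

open SimpleGraph

lemma univ_metricGenerator {V : Type*} {G : SimpleGraph V} (hc : G.Connected) :
    IsMetricGenerator G Set.univ := by
  intro u v huv
  refine ⟨v, Set.mem_univ _, ?_⟩
  have h1 := hc.pos_dist_of_ne huv
  rw [SimpleGraph.dist_self]
  omega

lemma metricDim_le_ncard {V : Type*} [Fintype V] {G : SimpleGraph V} {S : Set V}
    (h : IsMetricGenerator G S) : metricDim G ≤ S.ncard :=
  Nat.sInf_le ⟨S, S.toFinite, h, rfl⟩

lemma exists_metric_basis {V : Type*} [Fintype V] {G : SimpleGraph V} (hc : G.Connected) :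
    ∃ S : Set V, S.Finite ∧ IsMetricGenerator G S ∧ S.ncard = metricDim G :=
  Nat.sInf_mem (⟨(Set.univ : Set V).ncard, Set.univ, Set.toFinite _,
    univ_metricGenerator hc, rfl⟩ :
    Set.Nonempty {n | ∃ S : Set V, S.Finite ∧ IsMetricGenerator G S ∧ S.ncard = n})

lemma isPathGraph_of_singleton_generator {V : Type*} [Fintype V] {G : SimpleGraph V}
    (hc : G.Connected) (v : V) (hgen : IsMetricGenerator G {v}) : IsPathGraph G := by
  classical
  have hinj : Function.Injective (fun x => G.dist v x) := by
    intro x y hxy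
    by_contra hne
    obtain ⟨z, hz, hd⟩ := hgen x y hne
    rw [Set.mem_singleton_iff] at hz
    subst hz
    simp only at hxy
    exact hd (by rw [SimpleGraph.dist_comm, hxy, SimpleGraph.dist_comm])
  have hpred : ∀ x : V, G.dist v x ≠ 0 → ∃ w, G.Adj w x ∧ G.dist v w + 1 = G.dist v x := by
    intro x hx
    obtain ⟨p, hp⟩ := (hc.preconnected v x).exists_walk_length_eq_dist
    cases hqe : p.reverse with
    | nil =>
      exfalso
      have : p.length = 0 := by
        have := congrArg Walk.length hqe
        simpa using this
      rw [this] at hp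
      exact hx hp.symm
    | @cons _ w _ hadj q =>
      refine ⟨w, hadj.symm, ?_⟩
      have hlen : q.length + 1 = p.length := by
        have := congrArg Walk.length hqe
        simp at this
        omega
      have h1 : G.dist v w ≤ q.length := by
        have := SimpleGraph.dist_le q.reverse
        rwa [Walk.length_reverse] at this
      obtain ⟨r, hr⟩ := (hc.preconnected v w).exists_walk_length_eq_dist
      have h2 := SimpleGraph.dist_le (r.concat hadj.symm)
      rw [Walk.length_concat, hr] at h2
      omega
  have hVne : Nonempty V := hc.nonempty
  set n := Fintype.card V with hn
  set s : Finset ℕ := Finset.image (fun x => G.dist v x) Finset.univ with hs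
  have hscard : s.card = n := by
    rw [hs, Finset.card_image_of_injective _ hinj, Finset.card_univ]
  have hsne : s.Nonempty := by
    refine ⟨0, ?_⟩
    rw [hs]
    exact Finset.mem_image.mpr ⟨v, Finset.mem_univ _, SimpleGraph.dist_self⟩
  set M := s.max' hsne with hM
  have hdown : ∀ j, j ≤ M → M - j ∈ s := by
    intro j
    induction j with
    | zero => intro _; simpa using s.max'_mem hsne
    | succ j ih =>
      intro hj
      obtain ⟨x, -, hx⟩ := Finset.mem_image.mp (ih (by omega))
      have hx0 : G.dist v x ≠ 0 := by omega
      obtain ⟨w, -, hw⟩ := hpred x hx0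
      exact Finset.mem_image.mpr ⟨w, Finset.mem_univ _, by omega⟩
  have hseq : s = Finset.range (M + 1) := by
    apply Finset.Subset.antisymm
    · intro k hk
      have := s.le_max' k hk
      rw [Finset.mem_range]
      omega
    · intro k hk
      rw [Finset.mem_range] at hk
      have := hdown (M - k) (by omega)
      have he : M - (M - k) = k := by omega
      rwa [he] at this
  have hcardn : n = M + 1 := by rw [← hscard, hseq, Finset.card_range]
  have hbound : ∀ x, G.dist v x < n := by
    intro x
    have : G.dist v x ∈ s := Finset.mem_image.mpr ⟨x, Finset.mem_univ _, rfl⟩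
    rw [hseq, Finset.mem_range] at this
    omega
  set g : V → Fin n := fun x => ⟨G.dist v x, hbound x⟩ with hg
  have hgbij : Function.Bijective g := by
    rw [Fintype.bijective_iff_injective_and_card]
    exact ⟨fun x y h => hinj (congrArg Fin.val h), by simp [hn]⟩
  refine ⟨n, ⟨⟨Equiv.ofBijective g hgbij, ?_⟩⟩⟩
  intro x y
  rw [SimpleGraph.pathGraph_adj]
  show ((g x : Fin n).val + 1 = (g y).val ∨ (g y).val + 1 = (g x).val) ↔ G.Adj x y
  rw [hg]
  simp only
  constructor
  · rintro (h | h)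
    · obtain ⟨w, hadj, hw⟩ := hpred y (by omega)
      have hwx : w = x := hinj (by simp only; omega)
      rw [hwx] at hadj
      exact hadj
    · obtain ⟨w, hadj, hw⟩ := hpred x (by omega)
      have hwy : w = y := hinj (by simp only; omega)
      rw [hwy] at hadj
      exact hadj.symm
  · intro h
    have hd1 : G.dist x y = 1 := SimpleGraph.dist_eq_one_iff_adj.mpr h
    have hd2 : G.dist y x = 1 := SimpleGraph.dist_eq_one_iff_adj.mpr h.symm
    have h1 := hc.dist_triangle (u := v) (v := x) (w := y)
    have h2 := hc.dist_triangle (u := v) (v := y) (w := x)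
    have h3 : G.dist v x ≠ G.dist v y := fun he => h.ne (hinj he)
    omega

lemma two_le_basis_ncard {V : Type*} [Fintype V] {G : SimpleGraph V}
    (hc : G.Connected) (hp : ¬ IsPathGraph G) {S : Set V} (hS : IsMetricBasis G S)
    {v : V} (hv : v ∈ S) : 2 ≤ S.ncard := by
  by_contra h
  push_neg at h
  have h1 : 1 ≤ S.ncard := (Set.ncard_pos hS.1).mpr ⟨v, hv⟩
  have h2 : S.ncard = 1 := by omega
  obtain ⟨a, ha⟩ := Set.ncard_eq_one.mp h2
  have hav : a = v := by
    have := hv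
    rw [ha, Set.mem_singleton_iff] at this
    exact this.symm
  subst hav
  rw [ha] at hS
  exact hp (isPathGraph_of_singleton_generator hc a hS.2.1)

end PathLemma

/-- Lemma 5 (vertex part): gluing `G1` and `G2` by an edge `v1 v2` between
suitable basis vertices gives `dim(G) = dim(G1) + dim(G2) - 2`, with
`(S1 ∪ S2) \ {v1, v2}` a metric basis. -/
theorem metricDim_glueGraph {V1 V2 : Type*} [Fintype V1] [Fintype V2]
    (G1 : SimpleGraph V1) (G2 : SimpleGraph V2)
    (hc1 : G1.Connected) (hc2 : G2.Connected)
    (hp1 : ¬ IsPathGraph G1) (hp2 : ¬ IsPathGraph G2)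
    (S1 T1 : Set V1) (S2 T2 : Set V2)
    (hS1 : IsMetricBasis G1 S1) (hT1 : IsEdgeMetricBasis G1 T1)
    (hS2 : IsMetricBasis G2 S2) (hT2 : IsEdgeMetricBasis G2 T2)
    (v1 : V1) (hv1 : v1 ∈ S1 ∩ T1)
    (v2 u2 : V2) (hv2 : v2 ∈ S2 ∩ T2) (hu2 : u2 ∈ S2 ∩ T2)
    (hmax : ∀ z : V2, G2.dist u2 z ≤ G2.dist u2 v2) :
    metricDim (glueGraph G1 G2 v1 v2) = metricDim G1 + metricDim G2 - 2 ∧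
    IsMetricBasis (glueGraph G1 G2 v1 v2)
      ((Sum.inl '' S1 ∪ Sum.inr '' S2) \ {Sum.inl v1, Sum.inr v2}) := by
  classical
  open SimpleGraph Sum GlueAux in
  obtain ⟨hv1S, -⟩ := hv1
  obtain ⟨hv2S, -⟩ := hv2
  obtain ⟨hu2S, -⟩ := hu2
  set GG := glueGraph G1 G2 v1 v2 with hGG
  set S : Set (V1 ⊕ V2) :=
    (Sum.inl '' S1 ∪ Sum.inr '' S2) \ {Sum.inl v1, Sum.inr v2} with hSdef
  have hd1 : ∀ a b : V1, GG.dist (inl a) (inl b) = G1.dist a b := dist_ll hc1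
  have hd2 : ∀ a b : V2, GG.dist (inr a) (inr b) = G2.dist a b := dist_rr hc2
  have hdc : ∀ (a : V1) (b : V2),
      GG.dist (inl a) (inr b) = G1.dist a v1 + 1 + G2.dist v2 b := dist_lr hc1 hc2
  have hdc' : ∀ (b : V2) (a : V1),
      GG.dist (inr b) (inl a) = G1.dist a v1 + 1 + G2.dist v2 b := fun b a => by
    rw [SimpleGraph.dist_comm]; exact hdc a b
  have h2S1 : 2 ≤ S1.ncard := two_le_basis_ncard hc1 hp1 hS1 hv1S
  have h2S2 : 2 ≤ S2.ncard := two_le_basis_ncard hc2 hp2 hS2 hv2S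
  have hu2v2 : u2 ≠ v2 := by
    rintro rfl
    obtain ⟨z, hz, hzne⟩ := Set.exists_ne_of_one_lt_ncard (show 1 < S2.ncard by omega) u2
    have h0 := hmax z
    rw [SimpleGraph.dist_self] at h0
    have : G2.dist u2 z = 0 := by omega
    exact hzne ((hc2.dist_eq_zero_iff).mp this).symm
  obtain ⟨z1, hz1S, hz1ne⟩ := Set.exists_ne_of_one_lt_ncard (show 1 < S1.ncard by omega) v1
  have hu2mem : inr u2 ∈ S := by
    constructor
    · exact Or.inr ⟨u2, hu2S, rfl⟩
    · simp [hu2v2]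
  have hcross : ∀ (a : V1) (b : V2),
      GG.dist (inl a) (inr u2) ≠ GG.dist (inr b) (inr u2) := by
    intro a b
    rw [hdc, hd2]
    have h1 := hmax b
    have e1 : G2.dist b u2 = G2.dist u2 b := SimpleGraph.dist_comm
    have e2 : G2.dist v2 u2 = G2.dist u2 v2 := SimpleGraph.dist_comm
    omega
  -- S is a metric generator of GG
  have hSgen : IsMetricGenerator GG S := by
    intro x y hxy
    cases x with
    | inl a =>
      cases y with
      | inl b =>
        have hab : a ≠ b := fun h => hxy (by rw [h])
        by_cases hex : ∃ z ∈ S1, z ≠ v1 ∧ G1.dist a z ≠ G1.dist b z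
        · obtain ⟨z, hzS, hzne, hd⟩ := hex
          exact ⟨inl z, ⟨Or.inl ⟨z, hzS, rfl⟩, by simp [hzne]⟩,
            by rw [hd1, hd1]; exact hd⟩
        · obtain ⟨z, hzS, hd⟩ := hS1.2.1 a b hab
          have hzv : z = v1 := by
            by_contra hne
            exact hex ⟨z, hzS, hne, hd⟩
          rw [hzv] at hd
          refine ⟨inr u2, ⟨Or.inr ⟨u2, hu2S, rfl⟩, by simp [hu2v2]⟩, ?_⟩
          rw [hdc, hdc]
          omega
      | inr b => exact ⟨inr u2, hu2mem, hcross a b⟩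
    | inr a =>
      cases y with
      | inl b => exact ⟨inr u2, hu2mem, (hcross b a).symm⟩
      | inr b =>
        have hab : a ≠ b := fun h => hxy (by rw [h])
        by_cases hex : ∃ z ∈ S2, z ≠ v2 ∧ G2.dist a z ≠ G2.dist b z
        · obtain ⟨z, hzS, hzne, hd⟩ := hex
          exact ⟨inr z, ⟨Or.inr ⟨z, hzS, rfl⟩, by simp [hzne]⟩,
            by rw [hd2, hd2]; exact hd⟩
        · obtain ⟨z, hzS, hd⟩ := hS2.2.1 a b hab
          have hzv : z = v2 := by
            by_contra hne
            exact hex ⟨z, hzS, hne, hd⟩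
          rw [hzv] at hd
          refine ⟨inl z1, ⟨Or.inl ⟨z1, hz1S, rfl⟩, by simp [hz1ne]⟩, ?_⟩
          rw [hdc', hdc']
          have e1 : G2.dist v2 a = G2.dist a v2 := SimpleGraph.dist_comm
          have e2 : G2.dist v2 b = G2.dist b v2 := SimpleGraph.dist_comm
          omega
  -- cardinality of S
  have hSeq : S = inl '' (S1 \ {v1}) ∪ inr '' (S2 \ {v2}) := by
    rw [hSdef]
    ext x
    cases x with
    | inl a => simp
    | inr b => simp
  have hdisj : Disjoint (inl '' (S1 \ {v1}) : Set (V1 ⊕ V2)) (inr '' (S2 \ {v2})) := by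
    rw [Set.disjoint_left]
    rintro _ ⟨a, -, rfl⟩ ⟨b, -, h⟩
    simp at h
  have hScard : S.ncard = S1.ncard - 1 + (S2.ncard - 1) := by
    rw [hSeq, Set.ncard_union_eq hdisj,
      Set.ncard_image_of_injective _ Sum.inl_injective,
      Set.ncard_image_of_injective _ Sum.inr_injective,
      Set.ncard_diff_singleton_of_mem hv1S, Set.ncard_diff_singleton_of_mem hv2S]
  -- upper bound
  have hup : metricDim GG ≤ S1.ncard - 1 + (S2.ncard - 1) := by
    rw [← hScard]
    exact metricDim_le_ncard hSgen
  -- lower bound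
  obtain ⟨W, hWfin, hWgen, hWcard⟩ := exists_metric_basis (glue_connected hc1 hc2)
  have hW1 : IsMetricGenerator G1 (inl ⁻¹' W ∪ {v1}) := by
    intro a b hab
    obtain ⟨z, hzW, hd⟩ := hWgen (inl a) (inl b) (by simp [hab])
    cases z with
    | inl z =>
      refine ⟨z, Set.mem_union_left _ hzW, ?_⟩
      rwa [hd1, hd1] at hd
    | inr z =>
      refine ⟨v1, Set.mem_union_right _ rfl, ?_⟩
      rw [hdc, hdc] at hd
      intro he
      exact hd (by omega)
  have hW2 : IsMetricGenerator G2 (inr ⁻¹' W ∪ {v2}) := by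
    intro a b hab
    obtain ⟨z, hzW, hd⟩ := hWgen (inr a) (inr b) (by simp [hab])
    cases z with
    | inr z =>
      refine ⟨z, Set.mem_union_left _ hzW, ?_⟩
      rwa [hd2, hd2] at hd
    | inl z =>
      refine ⟨v2, Set.mem_union_right _ rfl, ?_⟩
      rw [hdc', hdc'] at hd
      have e1 : G2.dist v2 a = G2.dist a v2 := SimpleGraph.dist_comm
      have e2 : G2.dist v2 b = G2.dist b v2 := SimpleGraph.dist_comm
      intro he
      exact hd (by omega)
  have l1 : metricDim G1 ≤ (inl ⁻¹' W).ncard + 1 := by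
    refine (metricDim_le_ncard hW1).trans ?_
    refine (Set.ncard_union_le _ _).trans ?_
    simp
  have l2 : metricDim G2 ≤ (inr ⁻¹' W).ncard + 1 := by
    refine (metricDim_le_ncard hW2).trans ?_
    refine (Set.ncard_union_le _ _).trans ?_
    simp
  have hWsplit : W.ncard = (inl ⁻¹' W).ncard + (inr ⁻¹' W).ncard := by
    have hWeq : W = inl '' (inl ⁻¹' W) ∪ inr '' (inr ⁻¹' W) := by
      ext x
      cases x with
      | inl a => simp
      | inr b => simp
    have hdisj2 : Disjoint (inl '' (inl ⁻¹' W) : Set (V1 ⊕ V2)) (inr '' (inr ⁻¹' W)) := by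
      rw [Set.disjoint_left]
      rintro _ ⟨a, -, rfl⟩ ⟨b, -, h⟩
      simp at h
    conv_lhs => rw [hWeq]
    rw [Set.ncard_union_eq hdisj2,
      Set.ncard_image_of_injective _ Sum.inl_injective,
      Set.ncard_image_of_injective _ Sum.inr_injective]
  rw [← hGG] at hWcard
  have hlow : S1.ncard + S2.ncard ≤ metricDim GG + 2 := by
    have e1 : S1.ncard = metricDim G1 := hS1.2.2
    have e2 : S2.ncard = metricDim G2 := hS2.2.2
    omega
  have hdim : metricDim GG = S1.ncard - 1 + (S2.ncard - 1) := by
    apply le_antisymm hup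
    omega
  have e1 : S1.ncard = metricDim G1 := hS1.2.2
  have e2 : S2.ncard = metricDim G2 := hS2.2.2
  refine ⟨by rw [hdim]; omega, S.toFinite, hSgen, by rw [hScard, hdim]⟩
end

section
/- Let G_1 and G_2 be connected graphs, neither of which is a path. Suppose G_1 has a metric basis S_1 and an edge metric basis T_1 with a vertex v_1 ∈ S_1 ∩ T_1, and G_2 has a metric basis S_2 and an edge metric basis T_2 with vertices v_2, u_2 ∈ S_2 ∩ T_2 such that d_{G_2}(u_2, v_2) ≥ d_{G_2}(u_2, z) for every z ∈ V(G_2). Let G be the graph obtained from the disjoint union of G_1 and G_2 by adding the edge v_1 v_2. Then edim(G) = edim(G_1) + edim(G_2) − 2, and moreover T = (T_1 ∪ T_2) \ {v_1, v_2} is an edge metric basis of G. -/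
section Aux
variable {V : Type*} {G : SimpleGraph V}

lemma edgeDist_mk (G : SimpleGraph V) (u v z : V) :
    edgeDist G s(u, v) z = min (G.dist u z) (G.dist v z) := rfl

lemma potential_le {φ : V → ℕ} (hφ : ∀ x y, G.Adj x y → φ y ≤ φ x + 1) :
    ∀ {u v : V} (w : G.Walk u v), φ v ≤ φ u + w.length := by
  intro u v w
  induction w with
  | nil => simp
  | @cons a b c h p ih =>
      have := hφ a b h
      simp only [SimpleGraph.Walk.length_cons]
      omega

lemma exists_pred_of_dist_ne_zero (hc : G.Connected) {z x : V} (h : G.dist z x ≠ 0) :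
    ∃ p, G.Adj p x ∧ G.dist z p + 1 = G.dist z x := by
  obtain ⟨w, hw⟩ := (hc z x).exists_walk_length_eq_dist
  cases hrev : w.reverse with
  | nil =>
      exfalso
      have : w.reverse.length = 0 := by rw [hrev]; rfl
      rw [SimpleGraph.Walk.length_reverse] at this
      omega
  | @cons _ p _ hadj q =>
      refine ⟨p, hadj.symm, ?_⟩
      have hq : G.dist z p ≤ q.length := by
        simpa [SimpleGraph.dist_comm] using SimpleGraph.dist_le q
      have hlen : q.length + 1 = w.length := by
        have : w.reverse.length = q.length + 1 := by rw [hrev]; simp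
        rw [SimpleGraph.Walk.length_reverse] at this; omega
      have htri : G.dist z x ≤ G.dist z p + 1 := by
        have := hc.dist_triangle (u := z) (v := p) (w := x)
        rwa [SimpleGraph.dist_eq_one_iff_adj.mpr hadj.symm] at this
      omega
end Aux

section Path
variable {V : Type*} {G : SimpleGraph V}

lemma isPathGraph_of_singleton_gen [Fintype V] (hc : G.Connected) (z : V)
    (h : ∀ e ∈ G.edgeSet, ∀ f ∈ G.edgeSet, e ≠ f → edgeDist G e z ≠ edgeDist G f z) :
    IsPathGraph G := by
  classical
  have hinj : Function.Injective (fun x => G.dist z x) := by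
    intro x y hxy
    simp only at hxy
    by_contra hne
    by_cases h0 : G.dist z x = 0
    · have hx : z = x := (hc.dist_eq_zero_iff).mp h0
      have hy : z = y := (hc.dist_eq_zero_iff).mp (hxy ▸ h0)
      exact hne (hx ▸ hy)
    · obtain ⟨p, hp, hpd⟩ := exists_pred_of_dist_ne_zero hc h0
      obtain ⟨q, hq, hqd⟩ := exists_pred_of_dist_ne_zero hc (x := y) (hxy ▸ h0)
      have hef : s(p, x) ≠ s(q, y) := by
        intro hcon
        rw [Sym2.eq_iff] at hcon
        rcases hcon with ⟨rfl, rfl⟩ | ⟨rfl, rfl⟩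
        · exact hne rfl
        · omega
      have := h s(p, x) ((SimpleGraph.mem_edgeSet G).mpr hp)
        s(q, y) ((SimpleGraph.mem_edgeSet G).mpr hq) hef
      apply this
      rw [edgeDist_mk, edgeDist_mk, SimpleGraph.dist_comm (u := p),
        SimpleGraph.dist_comm (u := x), SimpleGraph.dist_comm (u := q),
        SimpleGraph.dist_comm (u := y)]
      omega
  have hdown : ∀ k, (k + 1) ∈ Set.range (fun x => G.dist z x) →
      k ∈ Set.range (fun x => G.dist z x) := by
    rintro k ⟨x, hx⟩
    simp only at hx
    obtain ⟨p, _, hpd⟩ := exists_pred_of_dist_ne_zero hc (z := z) (x := x) (by omega)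
    exact ⟨p, show G.dist z p = k by omega⟩
  have hrange : ∀ k, k ∈ Set.range (fun x => G.dist z x) → ∀ j, j ≤ k →
      j ∈ Set.range (fun x => G.dist z x) := by
    intro k
    induction k with
    | zero => intro hk j hj; exact (Nat.le_zero.mp hj) ▸ hk
    | succ k ih =>
        intro hk j hj
        rcases Nat.lt_or_ge j (k+1) with hlt | hge
        · exact ih (hdown k hk) j (by omega)
        · have : j = k + 1 := by omega
          exact this ▸ hk
  set n := Fintype.card V with hn
  have hbound : ∀ x, G.dist z x < n := by
    intro x
    have hsub : Finset.range (G.dist z x + 1) ⊆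
        Finset.image (fun y => G.dist z y) Finset.univ := by
      intro j hj
      simp only [Finset.mem_range] at hj
      obtain ⟨y, hy⟩ := hrange (G.dist z x) ⟨x, rfl⟩ j (by omega)
      simp only [Finset.mem_image]
      exact ⟨y, Finset.mem_univ y, hy⟩
    have h1 := Finset.card_le_card hsub
    rw [Finset.card_range] at h1
    have h2 : (Finset.image (fun y => G.dist z y) Finset.univ).card ≤ n := by
      simpa [hn] using Finset.card_image_le (s := (Finset.univ : Finset V))
        (f := fun y => G.dist z y)
    omega
  have hbij : Function.Bijective (fun x => (⟨G.dist z x, hbound x⟩ : Fin n)) := by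
    rw [Fintype.bijective_iff_injective_and_card]
    constructor
    · intro x y hxy
      apply hinj
      simpa [Fin.ext_iff] using hxy
    · simp [hn]
  have hadj : ∀ x y : V, G.Adj x y ↔
      (G.dist z x + 1 = G.dist z y ∨ G.dist z y + 1 = G.dist z x) := by
    intro x y
    constructor
    · intro hxy
      have h1 : G.dist z y ≤ G.dist z x + 1 := by
        have := hc.dist_triangle (u := z) (v := x) (w := y)
        rwa [SimpleGraph.dist_eq_one_iff_adj.mpr hxy] at this
      have h2 : G.dist z x ≤ G.dist z y + 1 := by
        have := hc.dist_triangle (u := z) (v := y) (w := x)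
        rwa [SimpleGraph.dist_eq_one_iff_adj.mpr hxy.symm] at this
      have h3 : G.dist z x ≠ G.dist z y := fun hcon => hxy.ne (hinj hcon)
      omega
    · rintro (hd | hd)
      · obtain ⟨p, hp, hpd⟩ := exists_pred_of_dist_ne_zero hc (z := z) (x := y) (by omega)
        have : p = x := hinj (show G.dist z p = G.dist z x by omega)
        exact this ▸ hp
      · obtain ⟨p, hp, hpd⟩ := exists_pred_of_dist_ne_zero hc (z := z) (x := x) (by omega)
        have : p = y := hinj (show G.dist z p = G.dist z y by omega)
        exact (this ▸ hp).symm
  refine ⟨n, ⟨⟨Equiv.ofBijective _ hbij, ?_⟩⟩⟩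
  intro x y
  rw [SimpleGraph.pathGraph_adj]
  simp only [Equiv.ofBijective_apply]
  rw [hadj]
end Path

section Card
variable {V : Type*} {G : SimpleGraph V}

lemma two_le_ncard_of_gen [Fintype V] (hc : G.Connected) (hp : ¬ IsPathGraph G)
    {T : Set V} (hT : IsEdgeMetricGenerator G T) : 2 ≤ T.ncard := by
  by_contra hcon
  push_neg at hcon
  apply hp
  rcases T.eq_empty_or_nonempty with rfl | ⟨z, hz⟩
  · obtain ⟨z⟩ := hc.nonempty
    apply isPathGraph_of_singleton_gen hc z
    intro e he f hf hne
    obtain ⟨w, hw, _⟩ := hT e he f hf hne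
    exact absurd hw (by simp)
  · apply isPathGraph_of_singleton_gen hc z
    intro e he f hf hne
    obtain ⟨w, hw, hwd⟩ := hT e he f hf hne
    have hsub : ∀ a ∈ T, ∀ b ∈ T, a = b := fun a ha b hb =>
      (Set.ncard_le_one_iff (Set.toFinite T)).mp (by omega) ha hb
    rwa [hsub w hw z hz] at hwd
end Card

section Glue
open Sum
variable {V1 V2 : Type*} {G1 : SimpleGraph V1} {G2 : SimpleGraph V2} {v1 : V1} {v2 : V2}

@[simp] lemma glue_adj_inl_inl {a b : V1} :
    (glueGraph G1 G2 v1 v2).Adj (inl a) (inl b) ↔ G1.Adj a b := by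
  rw [glueGraph, SimpleGraph.fromRel_adj]
  constructor
  · rintro ⟨hne, h | h⟩
    · exact h
    · exact h.symm
  · intro h
    exact ⟨by simp [h.ne], Or.inl h⟩

@[simp] lemma glue_adj_inr_inr {a b : V2} :
    (glueGraph G1 G2 v1 v2).Adj (inr a) (inr b) ↔ G2.Adj a b := by
  rw [glueGraph, SimpleGraph.fromRel_adj]
  constructor
  · rintro ⟨hne, h | h⟩
    · exact h
    · exact h.symm
  · intro h
    exact ⟨by simp [h.ne], Or.inl h⟩

@[simp] lemma glue_adj_inl_inr {a : V1} {b : V2} :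
    (glueGraph G1 G2 v1 v2).Adj (inl a) (inr b) ↔ a = v1 ∧ b = v2 := by
  rw [glueGraph, SimpleGraph.fromRel_adj]
  constructor
  · rintro ⟨hne, h | h⟩
    · exact h
    · exact h.elim
  · rintro ⟨rfl, rfl⟩
    exact ⟨by simp, Or.inl ⟨rfl, rfl⟩⟩

@[simp] lemma glue_adj_inr_inl {a : V2} {b : V1} :
    (glueGraph G1 G2 v1 v2).Adj (inr a) (inl b) ↔ b = v1 ∧ a = v2 := by
  rw [SimpleGraph.adj_comm]; exact glue_adj_inl_inr

def glueHomL : G1 →g glueGraph G1 G2 v1 v2 where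
  toFun := inl
  map_rel' := fun h => glue_adj_inl_inl.mpr h

def glueHomR : G2 →g glueGraph G1 G2 v1 v2 where
  toFun := inr
  map_rel' := fun h => glue_adj_inr_inr.mpr h

lemma glue_reachable (hc1 : G1.Connected) (hc2 : G2.Connected) :
    (glueGraph G1 G2 v1 v2).Connected := by
  rw [SimpleGraph.connected_iff]
  refine ⟨?_, ⟨inl (hc1.nonempty.some)⟩⟩
  have hL : ∀ a b : V1, (glueGraph G1 G2 v1 v2).Reachable (inl a) (inl b) := fun a b =>
    ⟨((hc1 a b).some).map (glueHomL)⟩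
  have hR : ∀ a b : V2, (glueGraph G1 G2 v1 v2).Reachable (inr a) (inr b) := fun a b =>
    ⟨((hc2 a b).some).map (glueHomR)⟩
  have hbr : (glueGraph G1 G2 v1 v2).Reachable (inl v1) (inr v2) :=
    SimpleGraph.Adj.reachable (glue_adj_inl_inr.mpr ⟨rfl, rfl⟩)
  rintro (a | a) (b | b)
  · exact hL a b
  · exact ((hL a v1).trans hbr).trans (hR v2 b)
  · exact ((hR a v2).trans hbr.symm).trans (hL v1 b)
  · exact hR a b

variable (G1 G2 v1 v2) in
lemma glue_phiL_le (hc1 : G1.Connected) (hc2 : G2.Connected) (a : V1) (t : V1 ⊕ V2) :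
    Sum.elim (fun c => G1.dist a c) (fun c => G1.dist a v1 + 1 + G2.dist v2 c) t ≤
      (glueGraph G1 G2 v1 v2).dist (inl a) t := by
  set φ : V1 ⊕ V2 → ℕ :=
    Sum.elim (fun c => G1.dist a c) (fun c => G1.dist a v1 + 1 + G2.dist v2 c) with hφdef
  have hφ : ∀ x y, (glueGraph G1 G2 v1 v2).Adj x y → φ y ≤ φ x + 1 := by
    have tri1 : ∀ (r c d : V1), G1.Adj c d → G1.dist r d ≤ G1.dist r c + 1 := by
      intro r c d hcd
      have := hc1.dist_triangle (u := r) (v := c) (w := d)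
      rwa [SimpleGraph.dist_eq_one_iff_adj.mpr hcd] at this
    have tri2 : ∀ (r c d : V2), G2.Adj c d → G2.dist r d ≤ G2.dist r c + 1 := by
      intro r c d hcd
      have := hc2.dist_triangle (u := r) (v := c) (w := d)
      rwa [SimpleGraph.dist_eq_one_iff_adj.mpr hcd] at this
    rintro (c | c) (d | d) hadj
    · exact tri1 a c d (glue_adj_inl_inl.mp hadj)
    · obtain ⟨rfl, rfl⟩ := glue_adj_inl_inr.mp hadj
      simp only [hφdef, Sum.elim_inl, Sum.elim_inr, SimpleGraph.dist_self]
      omega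
    · obtain ⟨rfl, rfl⟩ := glue_adj_inr_inl.mp hadj
      simp only [hφdef, Sum.elim_inl, Sum.elim_inr, SimpleGraph.dist_self]
      omega
    · have := tri2 v2 c d (glue_adj_inr_inr.mp hadj)
      simp only [hφdef, Sum.elim_inr]
      omega
  have hreach := (glue_reachable (v1 := v1) (v2 := v2) hc1 hc2).preconnected (inl a) t
  obtain ⟨w, hw⟩ := hreach.exists_walk_length_eq_dist
  have := potential_le hφ w
  have hz : φ (inl a) = 0 := by simp [hφdef]
  omega

variable (G1 G2 v1 v2) in
lemma glue_phiR_le (hc1 : G1.Connected) (hc2 : G2.Connected) (a : V2) (t : V1 ⊕ V2) :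
    Sum.elim (fun c => G2.dist a v2 + 1 + G1.dist v1 c) (fun c => G2.dist a c) t ≤
      (glueGraph G1 G2 v1 v2).dist (inr a) t := by
  set φ : V1 ⊕ V2 → ℕ :=
    Sum.elim (fun c => G2.dist a v2 + 1 + G1.dist v1 c) (fun c => G2.dist a c) with hφdef
  have hφ : ∀ x y, (glueGraph G1 G2 v1 v2).Adj x y → φ y ≤ φ x + 1 := by
    have tri1 : ∀ (r c d : V1), G1.Adj c d → G1.dist r d ≤ G1.dist r c + 1 := by
      intro r c d hcd
      have := hc1.dist_triangle (u := r) (v := c) (w := d)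
      rwa [SimpleGraph.dist_eq_one_iff_adj.mpr hcd] at this
    have tri2 : ∀ (r c d : V2), G2.Adj c d → G2.dist r d ≤ G2.dist r c + 1 := by
      intro r c d hcd
      have := hc2.dist_triangle (u := r) (v := c) (w := d)
      rwa [SimpleGraph.dist_eq_one_iff_adj.mpr hcd] at this
    rintro (c | c) (d | d) hadj
    · have := tri1 v1 c d (glue_adj_inl_inl.mp hadj)
      simp only [hφdef, Sum.elim_inl]
      omega
    · obtain ⟨rfl, rfl⟩ := glue_adj_inl_inr.mp hadj
      simp only [hφdef, Sum.elim_inl, Sum.elim_inr, SimpleGraph.dist_self]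
      omega
    · obtain ⟨rfl, rfl⟩ := glue_adj_inr_inl.mp hadj
      simp only [hφdef, Sum.elim_inl, Sum.elim_inr, SimpleGraph.dist_self]
      omega
    · exact tri2 a c d (glue_adj_inr_inr.mp hadj)
  have hreach := (glue_reachable (v1 := v1) (v2 := v2) hc1 hc2).preconnected (inr a) t
  obtain ⟨w, hw⟩ := hreach.exists_walk_length_eq_dist
  have := potential_le hφ w
  have hz : φ (inr a) = 0 := by simp [hφdef]
  omega

variable (G1 G2 v1 v2) in
lemma glue_dist_inl_inl (hc1 : G1.Connected) (hc2 : G2.Connected) (a b : V1) :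
    (glueGraph G1 G2 v1 v2).dist (inl a) (inl b) = G1.dist a b := by
  refine le_antisymm ?_ ?_
  · obtain ⟨w, hw⟩ := (hc1 a b).exists_walk_length_eq_dist
    calc (glueGraph G1 G2 v1 v2).dist (inl a) (inl b) ≤ (w.map glueHomL).length :=
          SimpleGraph.dist_le _
      _ = G1.dist a b := by rw [SimpleGraph.Walk.length_map]; exact hw
  · simpa using glue_phiL_le G1 G2 v1 v2 hc1 hc2 a (inl b)

variable (G1 G2 v1 v2) in
lemma glue_dist_inr_inr (hc1 : G1.Connected) (hc2 : G2.Connected) (a b : V2) :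
    (glueGraph G1 G2 v1 v2).dist (inr a) (inr b) = G2.dist a b := by
  refine le_antisymm ?_ ?_
  · obtain ⟨w, hw⟩ := (hc2 a b).exists_walk_length_eq_dist
    calc (glueGraph G1 G2 v1 v2).dist (inr a) (inr b) ≤ (w.map glueHomR).length :=
          SimpleGraph.dist_le _
      _ = G2.dist a b := by rw [SimpleGraph.Walk.length_map]; exact hw
  · simpa using glue_phiR_le G1 G2 v1 v2 hc1 hc2 a (inr b)

variable (G1 G2 v1 v2) in
lemma glue_dist_inl_inr (hc1 : G1.Connected) (hc2 : G2.Connected) (a : V1) (b : V2) :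
    (glueGraph G1 G2 v1 v2).dist (inl a) (inr b) = G1.dist a v1 + 1 + G2.dist v2 b := by
  refine le_antisymm ?_ ?_
  · obtain ⟨w1, hw1⟩ := (hc1 a v1).exists_walk_length_eq_dist
    obtain ⟨w2, hw2⟩ := (hc2 v2 b).exists_walk_length_eq_dist
    have hbr : (glueGraph G1 G2 v1 v2).Adj (inl v1) (inr v2) := glue_adj_inl_inr.mpr ⟨rfl, rfl⟩
    set w : (glueGraph G1 G2 v1 v2).Walk (inl a) (inr b) :=
      (w1.map glueHomL).append (SimpleGraph.Walk.cons hbr (w2.map glueHomR)) with hwdef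
    calc (glueGraph G1 G2 v1 v2).dist (inl a) (inr b) ≤ w.length := SimpleGraph.dist_le _
      _ = G1.dist a v1 + 1 + G2.dist v2 b := by
          have hbr' : (glueGraph G1 G2 v1 v2).Adj
              (glueHomL (G1 := G1) (G2 := G2) (v1 := v1) (v2 := v2) v1)
              (glueHomR (G1 := G1) (G2 := G2) (v1 := v1) (v2 := v2) v2) := hbr
          show ((w1.map glueHomL).append (SimpleGraph.Walk.cons hbr'
            (w2.map glueHomR))).length = _
          rw [SimpleGraph.Walk.length_append, SimpleGraph.Walk.length_cons,
            SimpleGraph.Walk.length_map, SimpleGraph.Walk.length_map, hw1, hw2]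
          omega
  · simpa using glue_phiL_le G1 G2 v1 v2 hc1 hc2 a (inr b)

variable (G1 G2 v1 v2) in
lemma glue_dist_inr_inl (hc1 : G1.Connected) (hc2 : G2.Connected) (a : V2) (b : V1) :
    (glueGraph G1 G2 v1 v2).dist (inr a) (inl b) = G2.dist a v2 + 1 + G1.dist v1 b := by
  rw [SimpleGraph.dist_comm, glue_dist_inl_inr G1 G2 v1 v2 hc1 hc2 b a,
    SimpleGraph.dist_comm (u := b), SimpleGraph.dist_comm (u := v2)]
  omega

variable (G1 G2 v1 v2) in
lemma glue_edge_cases {e : Sym2 (V1 ⊕ V2)} (he : e ∈ (glueGraph G1 G2 v1 v2).edgeSet) :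
    (∃ e1 ∈ G1.edgeSet, e = e1.map inl) ∨ (∃ e2 ∈ G2.edgeSet, e = e2.map inr) ∨
      e = s(inl v1, inr v2) := by
  induction e using Sym2.ind with
  | _ x y =>
    rw [SimpleGraph.mem_edgeSet] at he
    match x, y with
    | inl a, inl b =>
        exact Or.inl ⟨s(a, b), (SimpleGraph.mem_edgeSet G1).mpr (glue_adj_inl_inl.mp he), rfl⟩
    | inl a, inr b =>
        obtain ⟨rfl, rfl⟩ := glue_adj_inl_inr.mp he
        exact Or.inr (Or.inr rfl)
    | inr a, inl b =>
        obtain ⟨rfl, rfl⟩ := glue_adj_inr_inl.mp he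
        exact Or.inr (Or.inr (Sym2.eq_swap))
    | inr a, inr b =>
        exact Or.inr (Or.inl ⟨s(a, b), (SimpleGraph.mem_edgeSet G2).mpr (glue_adj_inr_inr.mp he), rfl⟩)

variable (G1 G2 v1 v2) in
lemma glue_edgeDist_inl_inl (hc1 : G1.Connected) (hc2 : G2.Connected) (e : Sym2 V1) (w : V1) :
    edgeDist (glueGraph G1 G2 v1 v2) (e.map inl) (inl w) = edgeDist G1 e w := by
  induction e using Sym2.ind with
  | _ x y =>
    rw [Sym2.map_pair_eq, edgeDist_mk, edgeDist_mk,
      glue_dist_inl_inl G1 G2 v1 v2 hc1 hc2, glue_dist_inl_inl G1 G2 v1 v2 hc1 hc2]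

variable (G1 G2 v1 v2) in
lemma glue_edgeDist_inl_inr (hc1 : G1.Connected) (hc2 : G2.Connected) (e : Sym2 V1) (w : V2) :
    edgeDist (glueGraph G1 G2 v1 v2) (e.map inl) (inr w) =
      edgeDist G1 e v1 + 1 + G2.dist v2 w := by
  induction e using Sym2.ind with
  | _ x y =>
    rw [Sym2.map_pair_eq, edgeDist_mk, edgeDist_mk,
      glue_dist_inl_inr G1 G2 v1 v2 hc1 hc2, glue_dist_inl_inr G1 G2 v1 v2 hc1 hc2]
    omega

variable (G1 G2 v1 v2) in
lemma glue_edgeDist_inr_inr (hc1 : G1.Connected) (hc2 : G2.Connected) (e : Sym2 V2) (w : V2) :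
    edgeDist (glueGraph G1 G2 v1 v2) (e.map inr) (inr w) = edgeDist G2 e w := by
  induction e using Sym2.ind with
  | _ x y =>
    rw [Sym2.map_pair_eq, edgeDist_mk, edgeDist_mk,
      glue_dist_inr_inr G1 G2 v1 v2 hc1 hc2, glue_dist_inr_inr G1 G2 v1 v2 hc1 hc2]

variable (G1 G2 v1 v2) in
lemma glue_edgeDist_inr_inl (hc1 : G1.Connected) (hc2 : G2.Connected) (e : Sym2 V2) (w : V1) :
    edgeDist (glueGraph G1 G2 v1 v2) (e.map inr) (inl w) =
      edgeDist G2 e v2 + 1 + G1.dist v1 w := by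
  induction e using Sym2.ind with
  | _ x y =>
    rw [Sym2.map_pair_eq, edgeDist_mk, edgeDist_mk,
      glue_dist_inr_inl G1 G2 v1 v2 hc1 hc2, glue_dist_inr_inl G1 G2 v1 v2 hc1 hc2]
    omega

variable (G1 G2 v1 v2) in
lemma glue_edgeDist_bridge_inl (hc1 : G1.Connected) (hc2 : G2.Connected) (w : V1) :
    edgeDist (glueGraph G1 G2 v1 v2) s(inl v1, inr v2) (inl w) = G1.dist v1 w := by
  rw [edgeDist_mk, glue_dist_inl_inl G1 G2 v1 v2 hc1 hc2,
    glue_dist_inr_inl G1 G2 v1 v2 hc1 hc2, SimpleGraph.dist_self]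
  omega

variable (G1 G2 v1 v2) in
lemma glue_edgeDist_bridge_inr (hc1 : G1.Connected) (hc2 : G2.Connected) (w : V2) :
    edgeDist (glueGraph G1 G2 v1 v2) s(inl v1, inr v2) (inr w) = G2.dist v2 w := by
  rw [edgeDist_mk, glue_dist_inl_inr G1 G2 v1 v2 hc1 hc2,
    glue_dist_inr_inr G1 G2 v1 v2 hc1 hc2, SimpleGraph.dist_self]
  omega
end Glue

open Sum

/-- Lemma 5 (edge part): gluing `G1` and `G2` by an edge `v1 v2` between
suitable basis vertices gives `edim(G) = edim(G1) + edim(G2) - 2`, with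
`(T1 ∪ T2) \ {v1, v2}` an edge metric basis. -/
theorem edgeMetricDim_glueGraph {V1 V2 : Type*} [Fintype V1] [Fintype V2]
    (G1 : SimpleGraph V1) (G2 : SimpleGraph V2)
    (hc1 : G1.Connected) (hc2 : G2.Connected)
    (hp1 : ¬ IsPathGraph G1) (hp2 : ¬ IsPathGraph G2)
    (S1 T1 : Set V1) (S2 T2 : Set V2)
    (hS1 : IsMetricBasis G1 S1) (hT1 : IsEdgeMetricBasis G1 T1)
    (hS2 : IsMetricBasis G2 S2) (hT2 : IsEdgeMetricBasis G2 T2)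
    (v1 : V1) (hv1 : v1 ∈ S1 ∩ T1)
    (v2 u2 : V2) (hv2 : v2 ∈ S2 ∩ T2) (hu2 : u2 ∈ S2 ∩ T2)
    (hmax : ∀ z : V2, G2.dist u2 z ≤ G2.dist u2 v2) :
    edgeMetricDim (glueGraph G1 G2 v1 v2) = edgeMetricDim G1 + edgeMetricDim G2 - 2 ∧
    IsEdgeMetricBasis (glueGraph G1 G2 v1 v2)
      ((Sum.inl '' T1 ∪ Sum.inr '' T2) \ {Sum.inl v1, Sum.inr v2}) := by
  classical
  set G := glueGraph G1 G2 v1 v2 with hG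
  -- u2 ≠ v2
  have hu2v2 : u2 ≠ v2 := by
    rintro rfl
    apply hp2
    have hall : ∀ z : V2, u2 = z := by
      intro z
      have h0 : G2.dist u2 z = 0 := Nat.le_zero.mp ((hmax z).trans_eq SimpleGraph.dist_self)
      exact (hc2.dist_eq_zero_iff).mp h0
    apply isPathGraph_of_singleton_gen hc2 u2
    intro e he f hf hnef
    exfalso
    induction e using Sym2.ind with
    | _ x y =>
      rw [SimpleGraph.mem_edgeSet] at he
      exact he.ne ((hall x).symm.trans (hall y))
  -- cardinality facts
  have h2T1 : 2 ≤ T1.ncard := two_le_ncard_of_gen hc1 hp1 hT1.2.1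
  have h2T2 : 2 ≤ T2.ncard := two_le_ncard_of_gen hc2 hp2 hT2.2.1
  have hd1 : (T1 \ {v1}).ncard = T1.ncard - 1 :=
    Set.ncard_diff_singleton_of_mem hv1.2
  have hd2 : (T2 \ {v2}).ncard = T2.ncard - 1 :=
    Set.ncard_diff_singleton_of_mem hv2.2
  obtain ⟨w1, hw1⟩ : (T1 \ {v1}).Nonempty := Set.nonempty_of_ncard_ne_zero (by omega)
  obtain ⟨w2, hw2⟩ : (T2 \ {v2}).Nonempty := Set.nonempty_of_ncard_ne_zero (by omega)
  have hu2T : u2 ∈ T2 \ {v2} := ⟨hu2.2, by simp [hu2v2]⟩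
  -- rewrite the candidate set
  set T : Set (V1 ⊕ V2) := inl '' (T1 \ {v1}) ∪ inr '' (T2 \ {v2}) with hTdef
  have hTset : (inl '' T1 ∪ inr '' T2) \ {inl v1, inr v2} = T := by
    ext x
    cases x <;> simp [hTdef] <;> aesop
  -- edge distance bound via u2
  have hEbound : ∀ e2 : Sym2 V2, edgeDist G2 e2 u2 ≤ G2.dist v2 u2 := by
    intro e2
    induction e2 using Sym2.ind with
    | _ x y =>
      have hx := hmax x
      have hy := hmax y
      rw [edgeDist_mk, SimpleGraph.dist_comm (u := x), SimpleGraph.dist_comm (u := y),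
        SimpleGraph.dist_comm (u := v2)]
      omega
  -- T is an edge metric generator of G
  have hgen : IsEdgeMetricGenerator G T := by
    have hmemL : ∀ w, w ∈ T1 \ {v1} → inl w ∈ T := fun w hw =>
      Set.mem_union_left _ (Set.mem_image_of_mem _ hw)
    have hmemR : ∀ w, w ∈ T2 \ {v2} → inr w ∈ T := fun w hw =>
      Set.mem_union_right _ (Set.mem_image_of_mem _ hw)
    -- helper: a G1-edge and a G2-edge are distinguished by u2
    have hcross : ∀ e1 : Sym2 V1, ∀ e2 : Sym2 V2,
        edgeDist G (e1.map inl) (inr u2) ≠ edgeDist G (e2.map inr) (inr u2) := by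
      intro e1 e2
      rw [glue_edgeDist_inl_inr G1 G2 v1 v2 hc1 hc2, glue_edgeDist_inr_inr G1 G2 v1 v2 hc1 hc2]
      have := hEbound e2
      omega
    -- helper: a G1-edge and the bridge are distinguished by w2
    have hbr1 : ∀ e1 : Sym2 V1,
        edgeDist G (e1.map inl) (inr w2) ≠ edgeDist G s(inl v1, inr v2) (inr w2) := by
      intro e1
      rw [glue_edgeDist_inl_inr G1 G2 v1 v2 hc1 hc2, glue_edgeDist_bridge_inr G1 G2 v1 v2 hc1 hc2]
      omega
    have hbr2 : ∀ e2 : Sym2 V2,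
        edgeDist G (e2.map inr) (inl w1) ≠ edgeDist G s(inl v1, inr v2) (inl w1) := by
      intro e2
      rw [glue_edgeDist_inr_inl G1 G2 v1 v2 hc1 hc2, glue_edgeDist_bridge_inl G1 G2 v1 v2 hc1 hc2]
      omega
    intro e he f hf hnef
    rcases glue_edge_cases G1 G2 v1 v2 he with ⟨e1, he1, rfl⟩ | ⟨e2, he2, rfl⟩ | rfl <;>
      rcases glue_edge_cases G1 G2 v1 v2 hf with ⟨f1, hf1, rfl⟩ | ⟨f2, hf2, rfl⟩ | rfl
    · -- both in G1
      obtain ⟨w, hwT, hwd⟩ := hT1.2.1 e1 he1 f1 hf1 (fun h => hnef (by rw [h]))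
      by_cases hwv : w = v1
      · rw [hwv] at hwd
        refine ⟨inr w2, hmemR w2 hw2, ?_⟩
        rw [glue_edgeDist_inl_inr G1 G2 v1 v2 hc1 hc2, glue_edgeDist_inl_inr G1 G2 v1 v2 hc1 hc2]
        omega
      · refine ⟨inl w, hmemL w ⟨hwT, by simp [hwv]⟩, ?_⟩
        rw [glue_edgeDist_inl_inl G1 G2 v1 v2 hc1 hc2, glue_edgeDist_inl_inl G1 G2 v1 v2 hc1 hc2]
        exact hwd
    · exact ⟨inr u2, hmemR u2 hu2T, hcross e1 f2⟩
    · exact ⟨inr w2, hmemR w2 hw2, hbr1 e1⟩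
    · exact ⟨inr u2, hmemR u2 hu2T, (hcross f1 e2).symm⟩
    · -- both in G2
      obtain ⟨w, hwT, hwd⟩ := hT2.2.1 e2 he2 f2 hf2 (fun h => hnef (by rw [h]))
      by_cases hwv : w = v2
      · rw [hwv] at hwd
        refine ⟨inl w1, hmemL w1 hw1, ?_⟩
        rw [glue_edgeDist_inr_inl G1 G2 v1 v2 hc1 hc2, glue_edgeDist_inr_inl G1 G2 v1 v2 hc1 hc2]
        omega
      · refine ⟨inr w, hmemR w ⟨hwT, by simp [hwv]⟩, ?_⟩
        rw [glue_edgeDist_inr_inr G1 G2 v1 v2 hc1 hc2, glue_edgeDist_inr_inr G1 G2 v1 v2 hc1 hc2]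
        exact hwd
    · exact ⟨inl w1, hmemL w1 hw1, hbr2 e2⟩
    · exact ⟨inr w2, hmemR w2 hw2, (hbr1 f1).symm⟩
    · exact ⟨inl w1, hmemL w1 hw1, (hbr2 f2).symm⟩
    · exact absurd rfl hnef
  -- cardinality of T
  have hTcard : T.ncard = edgeMetricDim G1 + edgeMetricDim G2 - 2 := by
    have hdisj : Disjoint (inl '' (T1 \ {v1}) : Set (V1 ⊕ V2)) (inr '' (T2 \ {v2})) := by
      rw [Set.disjoint_left]
      rintro x ⟨a, _, rfl⟩ ⟨b, _, hb⟩
      exact (Sum.inl_ne_inr hb.symm)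
    rw [hTdef, Set.ncard_union_eq hdisj (Set.toFinite _) (Set.toFinite _),
      Set.ncard_image_of_injective _ Sum.inl_injective,
      Set.ncard_image_of_injective _ Sum.inr_injective, hd1, hd2, ← hT1.2.2, ← hT2.2.2]
    omega
  -- lower bound for any generator
  have hlow : ∀ n ∈ {n | ∃ S : Set (V1 ⊕ V2), S.Finite ∧ IsEdgeMetricGenerator G S ∧
      S.ncard = n}, edgeMetricDim G1 + edgeMetricDim G2 - 2 ≤ n := by
    rintro n ⟨W, hWfin, hWgen, rfl⟩
    set A : Set V1 := {a | inl a ∈ W} with hA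
    set B : Set V2 := {b | inr b ∈ W} with hB
    have hWeq : W = inl '' A ∪ inr '' B := by
      ext x
      cases x <;> simp [hA, hB]
    have hWcard : W.ncard = A.ncard + B.ncard := by
      have hdisj : Disjoint (inl '' A : Set (V1 ⊕ V2)) (inr '' B) := by
        rw [Set.disjoint_left]
        rintro x ⟨a, _, rfl⟩ ⟨b, _, hb⟩
        exact (Sum.inl_ne_inr hb.symm)
      rw [hWeq, Set.ncard_union_eq hdisj (Set.toFinite _) (Set.toFinite _),
        Set.ncard_image_of_injective _ Sum.inl_injective,
        Set.ncard_image_of_injective _ Sum.inr_injective]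
    have hmem1 : ∀ e ∈ G1.edgeSet, e.map inl ∈ G.edgeSet := by
      intro e he
      induction e using Sym2.ind with
      | _ x y =>
        rw [SimpleGraph.mem_edgeSet] at he
        rw [Sym2.map_pair_eq, SimpleGraph.mem_edgeSet]
        exact glue_adj_inl_inl.mpr he
    have hmem2 : ∀ e ∈ G2.edgeSet, e.map inr ∈ G.edgeSet := by
      intro e he
      induction e using Sym2.ind with
      | _ x y =>
        rw [SimpleGraph.mem_edgeSet] at he
        rw [Sym2.map_pair_eq, SimpleGraph.mem_edgeSet]
        exact glue_adj_inr_inr.mpr he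
    have hg1 : IsEdgeMetricGenerator G1 (A ∪ {v1}) := by
      intro e he f hf hnef
      obtain ⟨z, hzW, hzd⟩ := hWgen (e.map inl) (hmem1 e he) (f.map inl) (hmem1 f hf)
        (fun h => hnef (Sym2.map.injective Sum.inl_injective h))
      match z with
      | inl w =>
          rw [glue_edgeDist_inl_inl G1 G2 v1 v2 hc1 hc2,
            glue_edgeDist_inl_inl G1 G2 v1 v2 hc1 hc2] at hzd
          exact ⟨w, Or.inl hzW, hzd⟩
      | inr y =>
          rw [glue_edgeDist_inl_inr G1 G2 v1 v2 hc1 hc2,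
            glue_edgeDist_inl_inr G1 G2 v1 v2 hc1 hc2] at hzd
          exact ⟨v1, Or.inr rfl, by omega⟩
    have hg2 : IsEdgeMetricGenerator G2 (B ∪ {v2}) := by
      intro e he f hf hnef
      obtain ⟨z, hzW, hzd⟩ := hWgen (e.map inr) (hmem2 e he) (f.map inr) (hmem2 f hf)
        (fun h => hnef (Sym2.map.injective Sum.inr_injective h))
      match z with
      | inr w =>
          rw [glue_edgeDist_inr_inr G1 G2 v1 v2 hc1 hc2,
            glue_edgeDist_inr_inr G1 G2 v1 v2 hc1 hc2] at hzd
          exact ⟨w, Or.inl hzW, hzd⟩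
      | inl y =>
          rw [glue_edgeDist_inr_inl G1 G2 v1 v2 hc1 hc2,
            glue_edgeDist_inr_inl G1 G2 v1 v2 hc1 hc2] at hzd
          exact ⟨v2, Or.inr rfl, by omega⟩
    have hle1 : edgeMetricDim G1 ≤ A.ncard + 1 := by
      have h1 : edgeMetricDim G1 ≤ (A ∪ {v1}).ncard :=
        Nat.sInf_le ⟨A ∪ {v1}, Set.toFinite _, hg1, rfl⟩
      have h2 := Set.ncard_union_le A ({v1} : Set V1)
      simp only [Set.ncard_singleton] at h2
      omega
    have hle2 : edgeMetricDim G2 ≤ B.ncard + 1 := by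
      have h1 : edgeMetricDim G2 ≤ (B ∪ {v2}).ncard :=
        Nat.sInf_le ⟨B ∪ {v2}, Set.toFinite _, hg2, rfl⟩
      have h2 := Set.ncard_union_le B ({v2} : Set V2)
      simp only [Set.ncard_singleton] at h2
      omega
    omega
  -- conclude
  have hdim : edgeMetricDim G = edgeMetricDim G1 + edgeMetricDim G2 - 2 := by
    refine le_antisymm (Nat.sInf_le ⟨T, Set.toFinite _, hgen, hTcard⟩) ?_
    exact le_csInf ⟨T.ncard, T, Set.toFinite _, hgen, rfl⟩ hlow
  refine ⟨hdim, ?_⟩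
  rw [hTset]
  exact ⟨Set.toFinite _, hgen, by rw [hTcard, hdim]⟩
end

section
/- Let n1 ≥ 5, n2 ≥ 1 and n3 ≥ 2, and let α = ⌊(n1+1)/2⌋ and β = ⌈(n1+3)/2⌉. Then the set S = {j_1, j_2, ..., j_{n3−1}, a_α, a_β} of n3 + 1 vertices is a metric generator of the graph G_{n1,n2,n3}. -/
namespace GGen

def cyc (N k l : ℕ) : ℕ := min ((l - k) + (k - l)) (N - ((l - k) + (k - l)))

lemma cyc_self (N t : ℕ) : cyc N t t = 0 := by unfold cyc; omega

variable {n1 n2 n3 : ℕ}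

open GVert SimpleGraph

def Da (s : ℕ) : GVert n1 n2 n3 → ℕ
  | .a k => cyc n1 k s
  | .b m => (m : ℕ) + 1 + cyc n1 1 s
  | .c => 1 + cyc n1 (n1 - 1) s
  | .i => 1 + cyc n1 0 s
  | .j _ => 2 + cyc n1 0 s

def Dj (q : Fin n3) : GVert n1 n2 n3 → ℕ
  | .a k => cyc n1 k 0 + 2
  | .b m => (m : ℕ) + 1 + cyc n1 1 0 + 2
  | .c => 1 + cyc n1 (n1 - 1) 0 + 2
  | .i => 1
  | .j q' => if q' = q then 0 else 2

lemma adj_iff {u v : GVert n1 n2 n3} :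
    (GGraph n1 n2 n3).Adj u v ↔ u ≠ v ∧ (GRel n1 n2 n3 u v ∨ GRel n1 n2 n3 v u) :=
  SimpleGraph.fromRel_adj _ _ _

lemma succ_mod_cases {N k l : ℕ} (hk : k < N) (h : l = (k + 1) % N) :
    (l = k + 1 ∧ k + 1 < N) ∨ (k + 1 = N ∧ l = 0) := by
  rcases Nat.lt_or_ge (k + 1) N with h' | h'
  · exact Or.inl ⟨by rw [h, Nat.mod_eq_of_lt h'], h'⟩
  · have hkN : k + 1 = N := by omega
    exact Or.inr ⟨hkN, by rw [h, hkN, Nat.mod_self]⟩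

lemma cyc_step {N k l s' : ℕ} (hk : k < N) (hs : s' < N) (h : l = (k + 1) % N) :
    cyc N k s' ≤ cyc N l s' + 1 ∧ cyc N l s' ≤ cyc N k s' + 1 := by
  rcases succ_mod_cases hk h with h' | h' <;> unfold cyc <;> omega


lemma Da_lip (h1 : 5 ≤ n1) {s : ℕ} (hs : s < n1) :
    ∀ u v : GVert n1 n2 n3, (GGraph n1 n2 n3).Adj u v → Da s u ≤ Da s v + 1 := by
  have key : ∀ u v : GVert n1 n2 n3, GRel n1 n2 n3 u v →
      Da s u ≤ Da s v + 1 ∧ Da s v ≤ Da s u + 1 := by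
    intro u v h
    cases u <;> cases v <;> try exact h.elim
    case a.a k l => exact cyc_step k.isLt hs h
    case a.b k m =>
      obtain ⟨hk, hm⟩ := h
      simp only [Da]; rw [hk]; omega
    case b.b m m' =>
      have h' : (m' : ℕ) = (m : ℕ) + 1 := h
      simp only [Da]; omega
    case a.c k =>
      simp only [Da]; rw [show ((k : ℕ) = n1 - 1) from h]; omega
    case a.i k =>
      simp only [Da]; rw [show ((k : ℕ) = 0) from h]; omega
    case i.j q => simp only [Da]; omega
  intro u v huv
  rw [adj_iff] at huv
  rcases huv.2 with h | h
  · exact (key u v h).1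
  · exact (key v u h).2

lemma Dj_lip (h1 : 5 ≤ n1) (q : Fin n3) :
    ∀ u v : GVert n1 n2 n3, (GGraph n1 n2 n3).Adj u v → Dj q u ≤ Dj q v + 1 := by
  have key : ∀ u v : GVert n1 n2 n3, GRel n1 n2 n3 u v →
      Dj q u ≤ Dj q v + 1 ∧ Dj q v ≤ Dj q u + 1 := by
    intro u v h
    cases u <;> cases v <;> try exact h.elim
    case a.a k l =>
      have := cyc_step (s' := 0) k.isLt (by omega) h
      simp only [Dj]; omega
    case a.b k m =>
      obtain ⟨hk, hm⟩ := h
      simp only [Dj]; rw [hk]; omega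
    case b.b m m' =>
      have h' : (m' : ℕ) = (m : ℕ) + 1 := h
      simp only [Dj]; omega
    case a.c k =>
      simp only [Dj]; rw [show ((k : ℕ) = n1 - 1) from h]; omega
    case a.i k =>
      simp only [Dj]; rw [show ((k : ℕ) = 0) from h]
      unfold cyc; omega
    case i.j q' => simp only [Dj]; split <;> omega
  intro u v huv
  rw [adj_iff] at huv
  rcases huv.2 with h | h
  · exact (key u v h).1
  · exact (key v u h).2

lemma adj_aa (h1 : 5 ≤ n1) (k l : Fin n1) (h : (l : ℕ) = ((k : ℕ) + 1) % n1) :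
    (GGraph n1 n2 n3).Adj (a k) (a l) := by
  rw [adj_iff]
  refine ⟨?_, Or.inl h⟩
  intro he
  have hkl : k = l := by injection he
  subst hkl
  rcases succ_mod_cases k.isLt h with h' | h' <;> omega

lemma walk_forward (h1 : 5 ≤ n1) :
    ∀ (m : ℕ) (k l : Fin n1), (l : ℕ) = ((k : ℕ) + m) % n1 →
      ∃ p : (GGraph n1 n2 n3).Walk (a k) (a l), p.length = m := by
  intro m
  induction m with
  | zero =>
    intro k l h
    have hlk : l = k := Fin.ext (by rw [h, Nat.add_zero, Nat.mod_eq_of_lt k.isLt])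
    subst hlk
    exact ⟨SimpleGraph.Walk.nil, rfl⟩
  | succ m ih =>
    intro k l h
    have hmod : (((k : ℕ) + 1) % n1) < n1 := Nat.mod_lt _ (by omega)
    have hadj : (GGraph n1 n2 n3).Adj (a k) (a ⟨((k : ℕ) + 1) % n1, hmod⟩) :=
      adj_aa h1 _ _ rfl
    have hl : (l : ℕ) = (((⟨((k : ℕ) + 1) % n1, hmod⟩ : Fin n1) : ℕ) + m) % n1 := by
      rw [h]
      show ((k : ℕ) + (m + 1)) % n1 = (((k : ℕ) + 1) % n1 + m) % n1
      rw [Nat.mod_add_mod]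
      congr 1
      omega
    obtain ⟨p, hp⟩ := ih _ l hl
    exact ⟨SimpleGraph.Walk.cons hadj p, by simp [hp]⟩

lemma exists_walk_aa (h1 : 5 ≤ n1) (k l : Fin n1) :
    ∃ p : (GGraph n1 n2 n3).Walk (a k) (a l), p.length = cyc n1 k l := by
  have hk := k.isLt; have hl := l.isLt
  rcases Nat.le_total (k : ℕ) (l : ℕ) with hle | hle
  · by_cases hc : (l : ℕ) - k ≤ n1 - ((l : ℕ) - k)
    · have hmod : (l : ℕ) = ((k : ℕ) + ((l : ℕ) - (k : ℕ))) % n1 := by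
        rw [Nat.add_sub_cancel' hle, Nat.mod_eq_of_lt hl]
      obtain ⟨p, hp⟩ := walk_forward h1 _ k l hmod
      exact ⟨p, by rw [hp]; unfold cyc; omega⟩
    · have hmod : (k : ℕ) = ((l : ℕ) + (n1 - ((l : ℕ) - (k : ℕ)))) % n1 := by
        have he : (l : ℕ) + (n1 - ((l : ℕ) - (k : ℕ))) = (k : ℕ) + n1 := by omega
        rw [he, Nat.add_mod_right, Nat.mod_eq_of_lt hk]
      obtain ⟨p, hp⟩ := walk_forward h1 _ l k hmod
      exact ⟨p.reverse, by rw [SimpleGraph.Walk.length_reverse, hp]; unfold cyc; omega⟩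
  · by_cases hc : (k : ℕ) - l ≤ n1 - ((k : ℕ) - l)
    · have hmod : (k : ℕ) = ((l : ℕ) + ((k : ℕ) - (l : ℕ))) % n1 := by
        rw [Nat.add_sub_cancel' hle, Nat.mod_eq_of_lt hk]
      obtain ⟨p, hp⟩ := walk_forward h1 _ l k hmod
      exact ⟨p.reverse, by rw [SimpleGraph.Walk.length_reverse, hp]; unfold cyc; omega⟩
    · have hmod : (l : ℕ) = ((k : ℕ) + (n1 - ((k : ℕ) - (l : ℕ)))) % n1 := by
        have he : (k : ℕ) + (n1 - ((k : ℕ) - (l : ℕ))) = (l : ℕ) + n1 := by omega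
        rw [he, Nat.add_mod_right, Nat.mod_eq_of_lt hl]
      obtain ⟨p, hp⟩ := walk_forward h1 _ k l hmod
      exact ⟨p, by rw [hp]; unfold cyc; omega⟩

lemma lip_le_dist {V : Type*} {G : SimpleGraph V} (f : V → ℕ)
    (hf : ∀ u v, G.Adj u v → f u ≤ f v + 1) {x y : V} (p : G.Walk x y) :
    f x ≤ f y + p.length := by
  induction p with
  | nil => simp
  | cons h p ih =>
    have := hf _ _ h
    simp only [SimpleGraph.Walk.length_cons]
    omega

lemma dist_eq_of {V : Type*} {G : SimpleGraph V} (f : V → ℕ)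
    (hf : ∀ u v, G.Adj u v → f u ≤ f v + 1) {x z : V} (hz : f z = 0)
    (p : G.Walk x z) (hp : p.length = f x) : G.dist x z = f x := by
  have hub : G.dist x z ≤ f x := hp ▸ SimpleGraph.dist_le p
  have hr : G.Reachable x z := ⟨p⟩
  obtain ⟨q, hq⟩ := hr.exists_walk_length_eq_dist
  have := lip_le_dist f hf q
  omega


lemma exists_walk_b (h1 : 5 ≤ n1) :
    ∀ (m : Fin n2), ∃ p : (GGraph n1 n2 n3).Walk (b m) (a ⟨1, by omega⟩),
      p.length = (m : ℕ) + 1 := by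
  suffices h : ∀ (n : ℕ) (m : Fin n2), (m : ℕ) = n →
      ∃ p : (GGraph n1 n2 n3).Walk (b m) (a ⟨1, by omega⟩), p.length = (m : ℕ) + 1 by
    exact fun m => h (m : ℕ) m rfl
  intro n
  induction n with
  | zero =>
    intro m hm
    have hadj : (GGraph n1 n2 n3).Adj (b m) (a ⟨1, by omega⟩) := by
      rw [adj_iff]
      exact ⟨(fun he => nomatch he), Or.inr ⟨rfl, hm⟩⟩
    exact ⟨SimpleGraph.Walk.cons hadj SimpleGraph.Walk.nil, by simp [hm]⟩
  | succ n ih =>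
    intro m hm
    have hn : n < n2 := by have := m.isLt; omega
    have hadj : (GGraph n1 n2 n3).Adj (b m) (b ⟨n, hn⟩) := by
      rw [adj_iff]
      refine ⟨fun he => ?_, Or.inr (show (m : ℕ) = ((⟨n, hn⟩ : Fin n2) : ℕ) + 1 from hm)⟩
      have : m = ⟨n, hn⟩ := by injection he
      rw [this] at hm; simp at hm
    obtain ⟨p, hp⟩ := ih ⟨n, hn⟩ rfl
    exact ⟨SimpleGraph.Walk.cons hadj p, by simp [hp, hm]⟩

lemma adj_ca (h1 : 5 ≤ n1) :
    (GGraph n1 n2 n3).Adj c (a ⟨n1 - 1, by omega⟩) := by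
  rw [adj_iff]
  exact ⟨(fun he => nomatch he), Or.inr rfl⟩

lemma adj_ia (h1 : 5 ≤ n1) :
    (GGraph n1 n2 n3).Adj i (a ⟨0, by omega⟩) := by
  rw [adj_iff]
  exact ⟨(fun he => nomatch he), Or.inr rfl⟩

lemma adj_ji (q : Fin n3) : (GGraph n1 n2 n3).Adj (j q) i := by
  rw [adj_iff]
  exact ⟨(fun he => nomatch he), Or.inr trivial⟩

lemma dist_to_a (h1 : 5 ≤ n1) (x : GVert n1 n2 n3) (s : Fin n1) :
    (GGraph n1 n2 n3).dist x (a s) = Da (s : ℕ) x := by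
  obtain ⟨p, hp⟩ : ∃ p : (GGraph n1 n2 n3).Walk x (a s), p.length = Da (s : ℕ) x := by
    cases x with
    | a k =>
      obtain ⟨p, hp⟩ := exists_walk_aa h1 k s
      exact ⟨p, by rw [hp]; rfl⟩
    | b m =>
      obtain ⟨p1, hp1⟩ := exists_walk_b h1 m
      obtain ⟨p2, hp2⟩ := exists_walk_aa h1 ⟨1, by omega⟩ s
      exact ⟨p1.append p2, by
        simp only [SimpleGraph.Walk.length_append, hp1, hp2, Da]; try omega⟩
    | c =>
      obtain ⟨p2, hp2⟩ := exists_walk_aa h1 ⟨n1 - 1, by omega⟩ s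
      exact ⟨SimpleGraph.Walk.cons (adj_ca h1) p2, by
        simp only [SimpleGraph.Walk.length_cons, hp2, Da]; try omega⟩
    | i =>
      obtain ⟨p2, hp2⟩ := exists_walk_aa h1 ⟨0, by omega⟩ s
      exact ⟨SimpleGraph.Walk.cons (adj_ia h1) p2, by
        simp only [SimpleGraph.Walk.length_cons, hp2, Da]; try omega⟩
    | j q =>
      obtain ⟨p2, hp2⟩ := exists_walk_aa h1 ⟨0, by omega⟩ s
      exact ⟨SimpleGraph.Walk.cons (adj_ji q) (SimpleGraph.Walk.cons (adj_ia h1) p2), by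
        simp only [SimpleGraph.Walk.length_cons, hp2, Da]; try omega⟩
  exact dist_eq_of _ (Da_lip h1 s.isLt) (by simp only [Da]; exact cyc_self _ _) p hp

lemma dist_to_j (h1 : 5 ≤ n1) (x : GVert n1 n2 n3) (q : Fin n3) :
    (GGraph n1 n2 n3).dist x (j q) = Dj q x := by
  have hwa : ∀ k : Fin n1, ∃ p : (GGraph n1 n2 n3).Walk (a k) (j q),
      p.length = cyc n1 (k : ℕ) 0 + 2 := by
    intro k
    obtain ⟨p1, hp1⟩ := exists_walk_aa h1 k ⟨0, by omega⟩
    refine ⟨p1.append (SimpleGraph.Walk.cons (adj_ia h1).symm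
      (SimpleGraph.Walk.cons (adj_ji q).symm SimpleGraph.Walk.nil)), ?_⟩
    simp only [SimpleGraph.Walk.length_append, SimpleGraph.Walk.length_cons,
      SimpleGraph.Walk.length_nil, hp1]
  obtain ⟨p, hp⟩ : ∃ p : (GGraph n1 n2 n3).Walk x (j q), p.length = Dj q x := by
    cases x with
    | a k =>
      obtain ⟨p, hp⟩ := hwa k
      exact ⟨p, by rw [hp]; rfl⟩
    | b m =>
      obtain ⟨p1, hp1⟩ := exists_walk_b h1 m
      obtain ⟨p2, hp2⟩ := hwa ⟨1, by omega⟩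
      exact ⟨p1.append p2, by
        simp only [SimpleGraph.Walk.length_append, hp1, hp2, Dj]; try omega⟩
    | c =>
      obtain ⟨p2, hp2⟩ := hwa ⟨n1 - 1, by omega⟩
      exact ⟨SimpleGraph.Walk.cons (adj_ca h1) p2, by
        simp only [SimpleGraph.Walk.length_cons, hp2, Dj]; omega⟩
    | i =>
      exact ⟨SimpleGraph.Walk.cons (adj_ji q).symm SimpleGraph.Walk.nil, rfl⟩
    | j q' =>
      by_cases hq : q' = q
      · subst hq
        exact ⟨SimpleGraph.Walk.nil, by simp [Dj]⟩
      · refine ⟨SimpleGraph.Walk.cons (adj_ji q') (SimpleGraph.Walk.cons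
          (adj_ji q).symm SimpleGraph.Walk.nil), ?_⟩
        simp [Dj, hq]
  exact dist_eq_of _ (Dj_lip h1 q) (by simp [Dj]) p hp


lemma ncard_S (h3 : 2 ≤ n3) (z1 z2 : Fin n1) (hz : z1 ≠ z2) :
    ({x : GVert n1 n2 n3 | ∃ q : Fin n3, (q : ℕ) < n3 - 1 ∧ x = GVert.j q} ∪
      {GVert.a z1, GVert.a z2}).ncard = n3 + 1 := by
  have hinjj : Function.Injective (GVert.j : Fin n3 → GVert n1 n2 n3) :=
    fun x y h => by injection h
  have hJ : {x : GVert n1 n2 n3 | ∃ q : Fin n3, (q : ℕ) < n3 - 1 ∧ x = GVert.j q} =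
      GVert.j '' {q : Fin n3 | (q : ℕ) < n3 - 1} := by
    ext x
    constructor
    · rintro ⟨q, hq, rfl⟩; exact ⟨q, hq, rfl⟩
    · rintro ⟨q, hq, rfl⟩; exact ⟨q, hq, rfl⟩
  have hT : {q : Fin n3 | (q : ℕ) < n3 - 1}.ncard = n3 - 1 := by
    have hinj2 : Function.Injective (fun r : Fin (n3 - 1) => (⟨(r : ℕ), by omega⟩ : Fin n3)) :=
      fun r r' h => Fin.ext (by have hval := congrArg Fin.val h; exact hval)
    have he : {q : Fin n3 | (q : ℕ) < n3 - 1} =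
        (fun r : Fin (n3 - 1) => (⟨(r : ℕ), by omega⟩ : Fin n3)) '' Set.univ := by
      ext q
      constructor
      · intro hq; exact ⟨⟨(q : ℕ), hq⟩, trivial, Fin.ext rfl⟩
      · rintro ⟨r, -, rfl⟩; exact r.isLt
    rw [he]
    exact (Set.ncard_image_of_injective Set.univ hinj2).trans
      (by rw [Set.ncard_univ, Nat.card_eq_fintype_card, Fintype.card_fin])
  have hne' : GVert.a z1 ≠ (GVert.a z2 : GVert n1 n2 n3) := fun h => hz (by injection h)
  have hdisj : Disjoint {x : GVert n1 n2 n3 | ∃ q : Fin n3, (q : ℕ) < n3 - 1 ∧ x = GVert.j q}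
      ({GVert.a z1, GVert.a z2} : Set (GVert n1 n2 n3)) := by
    rw [Set.disjoint_left]
    rintro x ⟨q, -, rfl⟩ hx
    rcases hx with h | h <;> simp at h
  rw [Set.ncard_union_eq hdisj (by rw [hJ]; exact (Set.toFinite _).image _)
      ((Set.finite_singleton _).insert _),
    hJ, Set.ncard_image_of_injective _ hinjj, hT, Set.ncard_pair hne']
  omega


set_option maxHeartbeats 1600000 in
lemma cyc_resolve (N k l : ℕ) (h1 : 5 ≤ N) (hk : k < N) (hl : l < N) (hkl : k ≠ l)
    (hc : cyc N k ((N + 1) / 2 - 1) = cyc N l ((N + 1) / 2 - 1)) :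
    cyc N k ((N + 4) / 2 - 1) ≠ cyc N l ((N + 4) / 2 - 1) := by
  unfold cyc at hc ⊢; omega

set_option maxHeartbeats 1000000 in
lemma L2 (N k m : ℕ) (h1 : 5 ≤ N) (hk : k < N) :
    cyc N k ((N + 4) / 2 - 1) ≠ m + 1 + cyc N 1 ((N + 4) / 2 - 1) := by
  unfold cyc; omega

set_option maxHeartbeats 1000000 in
lemma L3 (N k : ℕ) (h1 : 5 ≤ N) (hk : k < N) :
    cyc N k ((N + 1) / 2 - 1) ≠ 1 + cyc N (N - 1) ((N + 1) / 2 - 1) := by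
  unfold cyc; omega

set_option maxHeartbeats 1000000 in
lemma L4 (N k : ℕ) (h1 : 5 ≤ N) (hk : k < N) :
    cyc N k ((N + 1) / 2 - 1) ≠ 2 + cyc N 0 ((N + 1) / 2 - 1) := by
  unfold cyc; omega

set_option maxHeartbeats 1000000 in
lemma L5 (N m : ℕ) (h1 : 5 ≤ N) (hm : m = 0) :
    m + 1 + cyc N 1 ((N + 1) / 2 - 1) ≠ 1 + cyc N (N - 1) ((N + 1) / 2 - 1) := by
  subst hm; unfold cyc; omega

end GGen


/-- The set `S = {j_1, …, j_{n3-1}, a_α, a_β}`, with `α = ⌊(n1+1)/2⌋` and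
`β = ⌈(n1+3)/2⌉`, has `n3 + 1` vertices and is a metric generator of
`G_{n1,n2,n3}`.  (Recall `GVert.a k` stands for `a_{k+1}` and `GVert.j q`
for `j_{q+1}`, so `a_α = GVert.a ⟨α-1, _⟩` and `⌈(n1+3)/2⌉ = (n1+4)/2`.) -/
theorem isMetricGenerator_GGraph (n1 n2 n3 : ℕ) (h1 : 5 ≤ n1) (h2 : 1 ≤ n2) (h3 : 2 ≤ n3) :
    ∀ S : Set (GVert n1 n2 n3),
      S = {x | ∃ q : Fin n3, (q : ℕ) < n3 - 1 ∧ x = GVert.j q} ∪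
          {GVert.a ⟨(n1 + 1) / 2 - 1, by omega⟩, GVert.a ⟨(n1 + 4) / 2 - 1, by omega⟩} →
      S.ncard = n3 + 1 ∧ IsMetricGenerator (GGraph n1 n2 n3) S := by
  
  intro S hS
  obtain ⟨s1, hv1⟩ : ∃ s : Fin n1, (s : ℕ) = (n1 + 1) / 2 - 1 := ⟨⟨_, by omega⟩, rfl⟩
  obtain ⟨s2, hv2⟩ : ∃ s : Fin n1, (s : ℕ) = (n1 + 4) / 2 - 1 := ⟨⟨_, by omega⟩, rfl⟩
  obtain ⟨q0, hvq0⟩ : ∃ q : Fin n3, (q : ℕ) = 0 := ⟨⟨0, by omega⟩, rfl⟩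
  have hmem1 : GVert.a s1 ∈ S := by
    rw [hS]
    exact Set.mem_union_right _ (Set.mem_insert_iff.mpr
      (Or.inl (congrArg GVert.a (Fin.ext hv1))))
  have hmem2 : GVert.a s2 ∈ S := by
    rw [hS]
    exact Set.mem_union_right _ (Set.mem_insert_iff.mpr
      (Or.inr (Set.mem_singleton_iff.mpr (congrArg GVert.a (Fin.ext hv2)))))
  have hmemq : ∀ q : Fin n3, (q : ℕ) < n3 - 1 → GVert.j q ∈ S := fun q hq => by
    rw [hS]; exact Set.mem_union_left _ ⟨q, hq, rfl⟩
  have hmemq0 : GVert.j q0 ∈ S := hmemq q0 (by omega)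
  have hz1 : ∀ x : GVert n1 n2 n3,
      (GGraph n1 n2 n3).dist x (GVert.a s1) = GGen.Da ((n1 + 1) / 2 - 1) x :=
    fun x => by rw [GGen.dist_to_a h1 x s1, hv1]
  have hz2 : ∀ x : GVert n1 n2 n3,
      (GGraph n1 n2 n3).dist x (GVert.a s2) = GGen.Da ((n1 + 4) / 2 - 1) x :=
    fun x => by rw [GGen.dist_to_a h1 x s2, hv2]
  have hdj : ∀ (x : GVert n1 n2 n3) (q : Fin n3),
      (GGraph n1 n2 n3).dist x (GVert.j q) = GGen.Dj q x := GGen.dist_to_j h1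
  constructor
  · rw [hS]
    exact GGen.ncard_S h3 _ _
      (fun h => by
        have hc : (n1 + 1) / 2 - 1 = (n1 + 4) / 2 - 1 :=
          (congrArg Fin.val h : (n1 + 1) / 2 - 1 = (n1 + 4) / 2 - 1)
        omega)
  · intro u v huv
    cases u <;> cases v
    case a.a k l =>
      have hkl : (k : ℕ) ≠ l := fun h => huv (congrArg GVert.a (Fin.ext h))
      by_cases hc : GGen.cyc n1 k ((n1 + 1) / 2 - 1) = GGen.cyc n1 l ((n1 + 1) / 2 - 1)
      · refine ⟨GVert.a s2, hmem2, ?_⟩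
        simp only [hz2, GGen.Da]
        exact GGen.cyc_resolve n1 k l h1 k.isLt l.isLt hkl hc
      · refine ⟨GVert.a s1, hmem1, ?_⟩
        simp only [hz1, GGen.Da]
        exact hc
    case a.b k m =>
      refine ⟨GVert.a s2, hmem2, ?_⟩
      simp only [hz2, GGen.Da]
      exact GGen.L2 n1 k m h1 k.isLt
    case b.a m k =>
      refine ⟨GVert.a s2, hmem2, ?_⟩
      simp only [hz2, GGen.Da]
      exact (GGen.L2 n1 k m h1 k.isLt).symm
    case a.c k =>
      refine ⟨GVert.a s1, hmem1, ?_⟩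
      simp only [hz1, GGen.Da]
      exact GGen.L3 n1 k h1 k.isLt
    case c.a k =>
      refine ⟨GVert.a s1, hmem1, ?_⟩
      simp only [hz1, GGen.Da]
      exact (GGen.L3 n1 k h1 k.isLt).symm
    case a.i k =>
      refine ⟨GVert.j q0, hmemq0, ?_⟩
      simp only [hdj, GGen.Dj]
      omega
    case i.a k =>
      refine ⟨GVert.j q0, hmemq0, ?_⟩
      simp only [hdj, GGen.Dj]
      omega
    case a.j k q =>
      refine ⟨GVert.a s1, hmem1, ?_⟩
      simp only [hz1, GGen.Da]
      exact GGen.L4 n1 k h1 k.isLt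
    case j.a q k =>
      refine ⟨GVert.a s1, hmem1, ?_⟩
      simp only [hz1, GGen.Da]
      exact (GGen.L4 n1 k h1 k.isLt).symm
    case b.b m m' =>
      have hmm : (m : ℕ) ≠ m' := fun h => huv (congrArg GVert.b (Fin.ext h))
      refine ⟨GVert.j q0, hmemq0, ?_⟩
      simp only [hdj, GGen.Dj]
      omega
    case b.c m =>
      by_cases hm : (m : ℕ) = 0
      · refine ⟨GVert.a s1, hmem1, ?_⟩
        simp only [hz1, GGen.Da]
        exact GGen.L5 n1 m h1 hm
      · refine ⟨GVert.j q0, hmemq0, ?_⟩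
        simp only [hdj, GGen.Dj]
        unfold GGen.cyc; omega
    case c.b m =>
      by_cases hm : (m : ℕ) = 0
      · refine ⟨GVert.a s1, hmem1, ?_⟩
        simp only [hz1, GGen.Da]
        exact (GGen.L5 n1 m h1 hm).symm
      · refine ⟨GVert.j q0, hmemq0, ?_⟩
        simp only [hdj, GGen.Dj]
        unfold GGen.cyc; omega
    case b.i m =>
      refine ⟨GVert.j q0, hmemq0, ?_⟩
      simp only [hdj, GGen.Dj]
      omega
    case i.b m =>
      refine ⟨GVert.j q0, hmemq0, ?_⟩
      simp only [hdj, GGen.Dj]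
      omega
    case b.j m q =>
      refine ⟨GVert.j q0, hmemq0, ?_⟩
      simp only [hdj, GGen.Dj]
      split <;> omega
    case j.b q m =>
      refine ⟨GVert.j q0, hmemq0, ?_⟩
      simp only [hdj, GGen.Dj]
      split <;> omega
    case c.i =>
      refine ⟨GVert.j q0, hmemq0, ?_⟩
      simp only [hdj, GGen.Dj]
      unfold GGen.cyc; omega
    case i.c =>
      refine ⟨GVert.j q0, hmemq0, ?_⟩
      simp only [hdj, GGen.Dj]
      unfold GGen.cyc; omega
    case c.c => exact absurd rfl huv
    case i.i => exact absurd rfl huv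
    case c.j q =>
      refine ⟨GVert.j q0, hmemq0, ?_⟩
      simp only [hdj, GGen.Dj]
      split <;> (unfold GGen.cyc; omega)
    case j.c q =>
      refine ⟨GVert.j q0, hmemq0, ?_⟩
      simp only [hdj, GGen.Dj]
      split <;> (unfold GGen.cyc; omega)
    case i.j q =>
      refine ⟨GVert.j q0, hmemq0, ?_⟩
      simp only [hdj, GGen.Dj]
      split <;> omega
    case j.i q =>
      refine ⟨GVert.j q0, hmemq0, ?_⟩
      simp only [hdj, GGen.Dj]
      split <;> omega
    case j.j q q' =>
      have hqq : q ≠ q' := fun h => huv (congrArg GVert.j h)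
      by_cases hq : (q : ℕ) < n3 - 1
      · refine ⟨GVert.j q, hmemq q hq, ?_⟩
        simp only [hdj, GGen.Dj]
        rw [if_neg (Ne.symm hqq)]
        norm_num
      · have hq' : (q' : ℕ) < n3 - 1 := by
          have hb1 := q.isLt; have hb2 := q'.isLt
          have hne : (q : ℕ) ≠ (q' : ℕ) := fun h => hqq (Fin.ext h)
          omega
        refine ⟨GVert.j q', hmemq q' hq', ?_⟩
        simp only [hdj, GGen.Dj]
        rw [if_neg hqq]
        norm_num
end
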